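/- arXiv:1602.01045 — 8 statements merged into one kernel-verified Lean document; each statement's English description precedes it below -/
import Mathlib

section
/- Let q be a primitive l-th root of unity in a field K of characteristic 0, with l > 1 odd. In the q-Weyl algebra A_q with relation ∂x = q x ∂ + (q-1), the Euler operator α = 1 + x∂ satisfies αˡ = 1 + xˡ ∂ˡ. -/
/-!
The Euler operator `α = 1 + x∂` `q`-commutes with `x`: `α x = q x α`. Hence
`(α - q^k) xᵏ∂ᵏ = qᵏ xᵏ (α - 1) ∂ᵏ = qᵏ xᵏ⁺¹∂ᵏ⁺¹`, and telescoping gives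
`∏_{j<l} (α - qʲ) = q^(l(l-1)/2) xˡ∂ˡ`. Since `q` is a primitive `l`-th root of unity the left
side is `αˡ - 1`, and for odd `l` the scalar `q^(l(l-1)/2)` is `1`.
-/

/-- The defining relation of the `q`-Weyl algebra: `∂x = q x∂ + (q-1)·1`. -/
inductive qWeylRel (K : Type) [CommRing K] (q : K) :
    FreeAlgebra K (Fin 2) → FreeAlgebra K (Fin 2) → Prop
  | rel : qWeylRel K q (FreeAlgebra.ι K 1 * FreeAlgebra.ι K 0)
      (q • (FreeAlgebra.ι K 0 * FreeAlgebra.ι K 1) + (q - 1) • (1 : FreeAlgebra K (Fin 2)))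

/-- The `q`-Weyl algebra `A_q = K⟨x,∂⟩/(∂x - q x ∂ = q - 1)`. -/
abbrev qWeyl (K : Type) [CommRing K] (q : K) : Type := RingQuot (qWeylRel K q)

/-- The generator `x` of the `q`-Weyl algebra. -/
noncomputable def qX (K : Type) [CommRing K] (q : K) : qWeyl K q :=
  RingQuot.mkAlgHom K (qWeylRel K q) (FreeAlgebra.ι K 0)

/-- The generator `∂` of the `q`-Weyl algebra. -/
noncomputable def qD (K : Type) [CommRing K] (q : K) : qWeyl K q :=
  RingQuot.mkAlgHom K (qWeylRel K q) (FreeAlgebra.ι K 1)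

open Polynomial

theorem mul_pow_eq_smul_pow_mul {R A : Type*} [CommSemiring R] [Semiring A] [Algebra R A]
    {a b : A} {r : R} (h : a * b = r • (b * a)) (k : ℕ) : a * b ^ k = r ^ k • (b ^ k * a) := by
  induction k with
  | zero => simp
  | succ k ih =>
    rw [pow_succ, ← mul_assoc, ih, smul_mul_assoc, mul_assoc, h, mul_smul_comm, smul_smul,
      ← mul_assoc, ← pow_succ, pow_succ]

theorem prod_range_pow_eq_one_of_odd {M : Type*} [CommMonoid M] {q : M} {l : ℕ}
    (hq : q ^ l = 1) (hodd : Odd l) : ∏ j ∈ Finset.range l, q ^ j = 1 := by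
  obtain ⟨m, rfl⟩ := hodd
  have hsum : ∑ j ∈ Finset.range (2 * m + 1), j = (2 * m + 1) * m := by
    rw [Finset.sum_range_id, Nat.add_sub_cancel, Nat.mul_div_assoc _ (dvd_mul_right 2 m),
      Nat.mul_div_cancel_left m two_pos]
  rw [Finset.prod_pow_eq_pow_sum, hsum, pow_mul, hq, one_pow]

namespace qWeyl

variable {K : Type} [CommRing K] (q : K)

noncomputable def euler : qWeyl K q := 1 + qX K q * qD K q

theorem qD_mul_qX : qD K q * qX K q = q • (qX K q * qD K q) + (q - 1) • (1 : qWeyl K q) := by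
  simpa [qX, qD] using RingQuot.mkAlgHom_rel K (qWeylRel.rel (K := K) (q := q))

theorem euler_mul_qX : euler q * qX K q = q • (qX K q * euler q) := by
  rw [euler, add_mul, mul_assoc, qD_mul_qX]
  simp only [mul_add, mul_smul_comm, mul_one, one_mul, smul_add, ← mul_assoc]
  module

theorem euler_mul_qX_pow (k : ℕ) : euler q * qX K q ^ k = q ^ k • (qX K q ^ k * euler q) :=
  mul_pow_eq_smul_pow_mul (euler_mul_qX q) k

theorem euler_sub_mul_qX_pow_mul_qD_pow (k : ℕ) :
    (euler q - algebraMap K (qWeyl K q) (q ^ k)) * (qX K q ^ k * qD K q ^ k)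
      = q ^ k • (qX K q ^ (k + 1) * qD K q ^ (k + 1)) := by
  calc (euler q - algebraMap K (qWeyl K q) (q ^ k)) * (qX K q ^ k * qD K q ^ k)
      = euler q * qX K q ^ k * qD K q ^ k - q ^ k • (qX K q ^ k * qD K q ^ k) := by
        rw [sub_mul, Algebra.algebraMap_eq_smul_one, smul_one_mul, mul_assoc]
    _ = q ^ k • (qX K q ^ k * (euler q - 1) * qD K q ^ k) := by
        rw [euler_mul_qX_pow, mul_sub_one, sub_mul, smul_sub, smul_mul_assoc]
    _ = q ^ k • (qX K q ^ (k + 1) * qD K q ^ (k + 1)) := by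
        rw [euler, add_sub_cancel_left, pow_succ, pow_succ']
        simp only [mul_assoc]

theorem aeval_euler_prod_range (k : ℕ) :
    aeval (euler q) (∏ j ∈ Finset.range k, (X - C (q ^ j)))
      = (∏ j ∈ Finset.range k, q ^ j) • (qX K q ^ k * qD K q ^ k) := by
  induction k with
  | zero => simp
  | succ k ih =>
    rw [Finset.prod_range_succ_comm, map_mul, ih, mul_smul_comm, map_sub, aeval_X, aeval_C,
      euler_sub_mul_qX_pow_mul_qD_pow, smul_smul, Finset.prod_range_succ]

end qWeyl

theorem stmt4_general (K : Type) [Field K]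
    (l : ℕ) (hodd : Odd l) (q : K) (hq : IsPrimitiveRoot q l) :
    (1 + qX K q * qD K q) ^ l = 1 + (qX K q) ^ l * (qD K q) ^ l := by
  have hroots : (X ^ l - 1 : K[X]) = ∏ j ∈ Finset.range l, (X - C (q ^ j)) := by
    simpa using X_pow_sub_C_eq_prod hq hodd.pos (one_pow l)
  have key := congrArg (aeval (qWeyl.euler q)) hroots
  rw [qWeyl.aeval_euler_prod_range, prod_range_pow_eq_one_of_odd hq.pow_eq_one hodd, one_smul,
    map_sub, map_pow, aeval_X, map_one] at key
  exact sub_eq_iff_eq_add'.mp key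

/-- For `q` a primitive `l`-th root of unity (`l > 1` odd) in a field of characteristic zero,
the Euler operator `α = 1 + x∂` of the `q`-Weyl algebra satisfies `αˡ = 1 + xˡ∂ˡ`. -/
theorem stmt4 (K : Type) [Field K] [CharZero K]
    (l : ℕ) (hl : 1 < l) (hodd : Odd l) (q : K) (hq : IsPrimitiveRoot q l) :
    (1 + qX K q * qD K q) ^ l = 1 + (qX K q) ^ l * (qD K q) ^ l :=
  stmt4_general K l hodd q hq
end

section
/- Let q be a primitive l-th root of unity with l > 1 odd, and A_q the q-Weyl algebra with relation ∂x = q x ∂ + (q-1). Then the coefficient of xˡ∂ˡ in (x∂)·(x∂)···(x∂) (l factors, written in normal form xᵐ∂ⁿ with x's on the left) equals q^{l(l-1)/2}, which equals 1 since l is odd. -/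
variable {K : Type} [Field K] {q : K}

lemma qWeyl_rel0 : qD K q * qX K q = q • (qX K q * qD K q) + (q - 1) • (1 : qWeyl K q) := by
  have h := RingQuot.mkAlgHom_rel K (qWeylRel.rel (K := K) (q := q))
  simp only [map_mul, map_add, map_smul, map_one] at h
  exact h

lemma qWeyl_relD (k : ℕ) :
    (qD K q) ^ (k+1) * qX K q =
      q ^ (k+1) • (qX K q * (qD K q) ^ (k+1)) + (q ^ (k+1) - 1) • (qD K q) ^ k := by
  induction k with
  | zero => simpa using qWeyl_rel0
  | succ k ih =>
    have : (qD K q) ^ (k+2) * qX K q = qD K q * ((qD K q) ^ (k+1) * qX K q) := by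
      rw [pow_succ' (qD K q) (k+1), mul_assoc]
    rw [this, ih]
    rw [mul_add, mul_smul_comm, mul_smul_comm, ← mul_assoc, qWeyl_rel0]
    simp only [add_mul, smul_mul_assoc, one_mul, smul_smul, smul_add]
    rw [mul_assoc (qX K q), ← pow_succ', ← pow_succ']
    rw [add_assoc, ← add_smul]
    congr 1
    · congr 1 <;> ring
    · congr 1; ring

lemma qWeyl_relC (k : ℕ) :
    ((qX K q) ^ k * (qD K q) ^ k) * (qX K q * qD K q) =
      q ^ k • ((qX K q) ^ (k+1) * (qD K q) ^ (k+1)) +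
        (q ^ k - 1) • ((qX K q) ^ k * (qD K q) ^ k) := by
  cases k with
  | zero => simp
  | succ k =>
    have : ((qX K q) ^ (k+1) * (qD K q) ^ (k+1)) * (qX K q * qD K q) =
        (qX K q) ^ (k+1) * (((qD K q) ^ (k+1) * qX K q) * qD K q) := by
      rw [mul_assoc, mul_assoc]
    rw [this, qWeyl_relD, add_mul, smul_mul_assoc, smul_mul_assoc, mul_add,
      mul_smul_comm, mul_smul_comm]
    congr 1
    · congr 1
      rw [mul_assoc (qX K q), ← pow_succ (qD K q) (k+1), ← mul_assoc, ← pow_succ (qX K q)]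
    · congr 1
      rw [← pow_succ (qD K q)]

lemma qWeyl_mul_mem {n : ℕ} {w : qWeyl K q}
    (hw : w ∈ Submodule.span K ((fun i : ℕ => (qX K q) ^ i * (qD K q) ^ i) '' Set.Iio n)) :
    w * (qX K q * qD K q) ∈
      Submodule.span K ((fun i : ℕ => (qX K q) ^ i * (qD K q) ^ i) '' Set.Iio (n+1)) := by
  induction hw using Submodule.span_induction with
  | mem z hz =>
    obtain ⟨i, hi, rfl⟩ := hz
    simp only at hi ⊢
    rw [qWeyl_relC]
    refine add_mem (Submodule.smul_mem _ _ (Submodule.subset_span ⟨i+1, ?_, rfl⟩))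
      (Submodule.smul_mem _ _ (Submodule.subset_span ⟨i, ?_, rfl⟩)) <;>
      simp only [Set.mem_Iio] at hi ⊢ <;> omega
  | zero => simp
  | add a b _ _ ha hb => rw [add_mul]; exact add_mem ha hb
  | smul a z _ hz => rw [smul_mul_assoc]; exact Submodule.smul_mem _ _ hz

lemma qWeyl_tri (n : ℕ) : (n+1) * n / 2 = n * (n-1) / 2 + n := by
  have h : (n+1) * n / 2 = (n+1) * ((n+1)-1) / 2 := by simp
  rw [h, ← Finset.sum_range_id, ← Finset.sum_range_id, Finset.sum_range_succ]

lemma qWeyl_main (n : ℕ) :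
    (qX K q * qD K q) ^ n - q ^ (n * (n-1) / 2) • ((qX K q) ^ n * (qD K q) ^ n) ∈
      Submodule.span K ((fun i : ℕ => (qX K q) ^ i * (qD K q) ^ i) '' Set.Iio n) := by
  induction n with
  | zero => simp
  | succ n ih =>
    have key : (qX K q * qD K q) ^ (n+1)
        = q ^ (n*(n-1)/2) • (((qX K q)^n * (qD K q)^n) * (qX K q * qD K q))
          + ((qX K q * qD K q) ^ n - q ^ (n*(n-1)/2) • ((qX K q)^n * (qD K q)^n))
              * (qX K q * qD K q) := by
      rw [pow_succ, sub_mul, smul_mul_assoc]; abel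
    rw [key, qWeyl_relC]
    have hexp : q ^ (n*(n-1)/2) * q ^ n = q ^ ((n+1) * (n+1-1) / 2) := by
      rw [← pow_add]
      congr 1
      simpa using (qWeyl_tri n).symm
    have : q ^ (n*(n-1)/2) • (q ^ n • ((qX K q)^(n+1) * (qD K q)^(n+1))
          + (q ^ n - 1) • ((qX K q)^n * (qD K q)^n))
        = q ^ ((n+1) * (n+1-1) / 2) • ((qX K q)^(n+1) * (qD K q)^(n+1))
          + (q ^ (n*(n-1)/2) * (q ^ n - 1)) • ((qX K q)^n * (qD K q)^n) := by
      rw [smul_add, smul_smul, smul_smul, hexp]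
    rw [this, add_assoc, add_sub_cancel_left]
    exact add_mem
      (Submodule.smul_mem _ _ (Submodule.subset_span ⟨n, by simp, rfl⟩))
      (qWeyl_mul_mem ih)

/-- For `q` a primitive `l`-th root of unity (`l > 1` odd), writing the `l`-fold product
`(x∂)(x∂)⋯(x∂)` in normal form, the coefficient of the top term `xˡ∂ˡ` is `q^{l(l-1)/2}`
(the lower order terms being multiples of `xⁱ∂ⁱ` for `i < l`), and `q^{l(l-1)/2} = 1`
since `l` is odd. -/
theorem stmt5 (K : Type) [Field K] [CharZero K]
    (l : ℕ) (hl : 1 < l) (hodd : Odd l) (q : K) (hq : IsPrimitiveRoot q l) :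
    (∃ c : Fin l → K,
      (qX K q * qD K q) ^ l =
        q ^ (l * (l - 1) / 2) • ((qX K q) ^ l * (qD K q) ^ l) +
          ∑ i : Fin l, c i • ((qX K q) ^ (i : ℕ) * (qD K q) ^ (i : ℕ))) ∧
    q ^ (l * (l - 1) / 2) = 1 := by
  constructor
  · have h := qWeyl_main (K := K) (q := q) l
    have himg : ((fun i : ℕ => (qX K q) ^ i * (qD K q) ^ i) '' Set.Iio l)
        = Set.range (fun i : Fin l => (qX K q) ^ (i : ℕ) * (qD K q) ^ (i : ℕ)) := by
      ext z
      constructor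
      · rintro ⟨i, hi, rfl⟩; exact ⟨⟨i, hi⟩, rfl⟩
      · rintro ⟨i, rfl⟩; exact ⟨i, i.2, rfl⟩
    rw [himg, Finsupp.mem_span_range_iff_exists_finsupp] at h
    obtain ⟨c, hc⟩ := h
    refine ⟨c, ?_⟩
    rw [Finsupp.sum_fintype] at hc
    · rw [hc]; abel
    · intro i; simp
  · obtain ⟨m, hm⟩ := hodd
    have h1 : l - 1 = 2 * m := by omega
    have h2 : l * (2 * m) = l * m * 2 := by ring
    have hdiv : l * (l - 1) / 2 = l * m := by
      rw [h1, h2, Nat.mul_div_cancel _ (by norm_num)]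
    rw [hdiv, pow_mul, hq.pow_eq_one, one_pow]
end

section
/- Let q be a primitive l-th root of unity (l > 1) in a field K of characteristic 0, and A_q the q-Weyl algebra with relation ∂x = q x ∂ + (q-1). Then the center of A_q equals the subalgebra K[xˡ, ∂ˡ] generated by xˡ and ∂ˡ. -/
/-!
The monomials `xᵐ ∂ⁿ` form a basis of `A_q`. They span because `x` and `∂` multiply them back
into their span. They are linearly independent because `xᵐ ∂ⁿ` sends the vector `t^λ` of a
representation on `⨁_{j ∈ ℤ} K[λ] t^(j+λ)` to `t^(m-n+λ)` times a polynomial of degree `n` in `λ`.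
In this basis `[x, xᵐ ∂ⁿ] = (1 - qⁿ)(xᵐ⁺¹ ∂ⁿ + xᵐ ∂ⁿ⁻¹)`, so comparing coefficients shows that an
element commuting with `x` only involves monomials with `qⁿ = 1`; the anti-automorphism exchanging
`x` and `∂` gives `qᵐ = 1` for elements commuting with `∂`. Conversely
`∂ xˡ = qˡ xˡ ∂ + (qˡ - 1) xˡ⁻¹` shows that `xˡ`, and symmetrically `∂ˡ`, are central.
-/

section QWeyl

variable {K : Type} [Field K] {q : K}

theorem qD_mul_qX : qD K q * qX K q = q • (qX K q * qD K q) + (q - 1) • 1 := by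
  simpa [qX, qD] using RingQuot.mkAlgHom_rel K (qWeylRel.rel (K := K) (q := q))

theorem qD_mul_qX_pow (m : ℕ) :
    qD K q * qX K q ^ m = q ^ m • (qX K q ^ m * qD K q) + (q ^ m - 1) • qX K q ^ (m - 1) := by
  induction m with
  | zero => simp
  | succ m ih =>
    rcases m with _ | m
    · simp [qD_mul_qX]
    rw [pow_succ, ← mul_assoc, ih, add_mul, smul_mul_assoc, smul_mul_assoc, mul_assoc, qD_mul_qX]
    simp only [mul_add, mul_smul_comm, mul_one, ← mul_assoc, ← pow_succ, smul_add, smul_smul,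
      Nat.add_sub_cancel]
    module

variable (K q) in
noncomputable def qWeylFlip : qWeyl K q →ₐ[K] (qWeyl K q)ᵐᵒᵖ :=
  RingQuot.liftAlgHom K
    ⟨FreeAlgebra.lift K ![MulOpposite.op (qD K q), MulOpposite.op (qX K q)], by
    rintro _ _ ⟨⟩
    apply MulOpposite.unop_injective
    simpa using qD_mul_qX⟩

@[simp]
theorem qWeylFlip_qX : qWeylFlip K q (qX K q) = MulOpposite.op (qD K q) := by
  simp [qWeylFlip, qX]

@[simp]
theorem qWeylFlip_qD : qWeylFlip K q (qD K q) = MulOpposite.op (qX K q) := by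
  simp [qWeylFlip, qD]

theorem qD_pow_mul_qX (n : ℕ) :
    qD K q ^ n * qX K q = q ^ n • (qX K q * qD K q ^ n) + (q ^ n - 1) • qD K q ^ (n - 1) := by
  simpa using congrArg (MulOpposite.unop ∘ qWeylFlip K q) (qD_mul_qX_pow (K := K) (q := q) n)

variable (K q) in
noncomputable def qMonomial (p : ℕ × ℕ) : qWeyl K q := qX K q ^ p.1 * qD K q ^ p.2

theorem qX_mul_qMonomial (p : ℕ × ℕ) :
    qX K q * qMonomial K q p = qMonomial K q (p.1 + 1, p.2) := by
  simp only [qMonomial, ← mul_assoc, ← pow_succ']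

theorem qMonomial_mul_qD (p : ℕ × ℕ) :
    qMonomial K q p * qD K q = qMonomial K q (p.1, p.2 + 1) := by
  simp only [qMonomial, mul_assoc, ← pow_succ]

theorem qD_mul_qMonomial (p : ℕ × ℕ) :
    qD K q * qMonomial K q p =
      q ^ p.1 • qMonomial K q (p.1, p.2 + 1) + (q ^ p.1 - 1) • qMonomial K q (p.1 - 1, p.2) := by
  rw [qMonomial, ← mul_assoc, qD_mul_qX_pow, add_mul, smul_mul_assoc, smul_mul_assoc, mul_assoc,
    ← pow_succ']
  rfl

theorem qMonomial_mul_qX (p : ℕ × ℕ) :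
    qMonomial K q p * qX K q =
      q ^ p.2 • qMonomial K q (p.1 + 1, p.2) + (q ^ p.2 - 1) • qMonomial K q (p.1, p.2 - 1) := by
  rw [qMonomial, mul_assoc, qD_pow_mul_qX, mul_add, mul_smul_comm, mul_smul_comm, ← mul_assoc,
    ← pow_succ]
  rfl

theorem qWeylFlip_qMonomial (p : ℕ × ℕ) :
    qWeylFlip K q (qMonomial K q p) = MulOpposite.op (qMonomial K q p.swap) := by
  simp [qMonomial]

theorem adjoin_qX_qD : Algebra.adjoin K {qX K q, qD K q} = ⊤ := by
  rw [eq_top_iff]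
  rintro z -
  obtain ⟨w, rfl⟩ := RingQuot.mkAlgHom_surjective K (qWeylRel K q) z
  induction w with
  | grade0 r => simpa only [AlgHom.commutes] using Subalgebra.algebraMap_mem _ r
  | grade1 i =>
    fin_cases i
    · exact Algebra.subset_adjoin (Set.mem_insert _ _)
    · exact Algebra.subset_adjoin (Set.mem_insert_of_mem _ rfl)
  | mul a b ha hb => simpa only [map_mul] using mul_mem ha hb
  | add a b ha hb => simpa only [map_add] using add_mem ha hb

theorem span_qMonomial : Submodule.span K (Set.range (qMonomial K q)) = ⊤ := by
  set S := Submodule.span K (Set.range (qMonomial K q))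
  have mem (p : ℕ × ℕ) : qMonomial K q p ∈ S := Submodule.subset_span ⟨p, rfl⟩
  have mul_mem_of_mem (s : qWeyl K q) (hs : s ∈ S) (a : qWeyl K q)
      (ha : ∀ p, a * qMonomial K q p ∈ S) : a * s ∈ S := by
    induction hs using Submodule.span_induction with
    | mem _ h => obtain ⟨p, rfl⟩ := h; exact ha p
    | zero => simp
    | add _ _ _ _ h₁ h₂ => rw [mul_add]; exact S.add_mem h₁ h₂
    | smul c _ _ h => rw [mul_smul_comm]; exact S.smul_mem c h
  have left_mul (a : qWeyl K q) : ∀ s ∈ S, a * s ∈ S := by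
    have ha : a ∈ Algebra.adjoin K {qX K q, qD K q} := by rw [adjoin_qX_qD]; trivial
    induction ha using Algebra.adjoin_induction with
    | mem a h =>
      rcases h with rfl | rfl
      · refine fun s hs => mul_mem_of_mem s hs _ fun p => ?_
        rw [qX_mul_qMonomial]
        exact mem _
      · refine fun s hs => mul_mem_of_mem s hs _ fun p => ?_
        rw [qD_mul_qMonomial]
        exact S.add_mem (S.smul_mem _ (mem _)) (S.smul_mem _ (mem _))
    | algebraMap r => intro s hs; rw [← Algebra.smul_def]; exact S.smul_mem r hs
    | add a b _ _ ha hb => intro s hs; rw [add_mul]; exact S.add_mem (ha s hs) (hb s hs)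
    | mul a b _ _ ha hb => intro s hs; rw [mul_assoc]; exact ha _ (hb s hs)
  rw [eq_top_iff]
  rintro z -
  simpa [qMonomial] using left_mul z (qMonomial K q (0, 0)) (mem _)

open Polynomial

variable (q) in
noncomputable def qWeight (j : ℤ) : K[X] := C (q ^ j) * X + C (q ^ j - 1)

theorem degree_qWeight (hq0 : q ≠ 0) (j : ℤ) : (qWeight q j).degree = 1 :=
  degree_linear (zpow_ne_zero j hq0)

theorem qWeight_add_one (hq0 : q ≠ 0) (j : ℤ) :
    qWeight q (j + 1) = C q * qWeight q j + C (q - 1) := by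
  simp only [qWeight, zpow_add_one₀ hq0, C_mul, C_sub, C_1]
  ring

variable (K) in
noncomputable def qShift : Module.End K (ℤ →₀ K[X]) :=
  Finsupp.lmapDomain K[X] K (· + 1)

variable (q) in
noncomputable def qLower : Module.End K (ℤ →₀ K[X]) :=
  Finsupp.lsum K fun j => Finsupp.lsingle (j - 1) ∘ₗ LinearMap.mulLeft K (qWeight q j)

theorem qShift_single (j : ℤ) (f : K[X]) :
    qShift K (Finsupp.single j f) = Finsupp.single (j + 1) f := by
  simp [qShift]

theorem qLower_single (j : ℤ) (f : K[X]) :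
    qLower q (Finsupp.single j f) = Finsupp.single (j - 1) (qWeight q j * f) := by
  simp [qLower]

theorem qLower_mul_qShift (hq0 : q ≠ 0) :
    qLower q * qShift K = q • (qShift K * qLower q) + (q - 1) • 1 := by
  refine Finsupp.lhom_ext fun j f => ?_
  simp only [Module.End.mul_apply, LinearMap.add_apply, LinearMap.smul_apply,
    Module.End.one_apply, qShift_single, qLower_single, add_sub_cancel_right, sub_add_cancel,
    Finsupp.smul_single, ← Finsupp.single_add, qWeight_add_one hq0, smul_eq_C_mul]
  ring_nf

/-- The representation of `A_q` on `ℤ →₀ K[λ]`, where `single j f` stands for `f · t^(j+λ)` and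
`λ + 1` plays the role of `q^λ`: `x` multiplies by `t` and `∂` is the `q`-difference operator
`t^s ↦ (q^s - 1) t^(s-1)`. -/
noncomputable def qWeylRep (hq0 : q ≠ 0) : qWeyl K q →ₐ[K] Module.End K (ℤ →₀ K[X]) :=
  RingQuot.liftAlgHom K ⟨FreeAlgebra.lift K ![qShift K, qLower q], by
    rintro _ _ ⟨⟩
    simpa using qLower_mul_qShift hq0⟩

theorem qShift_pow_single (m : ℕ) (j : ℤ) (f : K[X]) :
    (qShift K ^ m) (Finsupp.single j f) = Finsupp.single (j + m) f := by
  induction m with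
  | zero => simp
  | succ m ih => rw [pow_succ', Module.End.mul_apply, ih, qShift_single]; push_cast; ring_nf

theorem qLower_pow_single_zero (n : ℕ) :
    (qLower q ^ n) (Finsupp.single 0 1) =
      Finsupp.single (-n : ℤ) (∏ i ∈ Finset.range n, qWeight q (-i)) := by
  induction n with
  | zero => simp
  | succ n ih =>
    rw [pow_succ', Module.End.mul_apply, ih, qLower_single, Finset.prod_range_succ, mul_comm]
    push_cast; ring_nf

theorem qWeylRep_qMonomial_single (hq0 : q ≠ 0) (p : ℕ × ℕ) :
    qWeylRep hq0 (qMonomial K q p) (Finsupp.single 0 1) =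
      Finsupp.single ((p.1 : ℤ) - p.2) (∏ i ∈ Finset.range p.2, qWeight q (-i)) := by
  have hX : qWeylRep hq0 (qX K q) = qShift K := by simp [qWeylRep, qX]
  have hD : qWeylRep hq0 (qD K q) = qLower q := by simp [qWeylRep, qD]
  rw [qMonomial, map_mul, map_pow, map_pow, hX, hD, Module.End.mul_apply,
    qLower_pow_single_zero, qShift_pow_single, neg_add_eq_sub]

variable (q) in
noncomputable def qWeightProd (hq0 : q ≠ 0) : Polynomial.Sequence K where
  elems' n := ∏ i ∈ Finset.range n, qWeight q (-i)
  degree_eq' n := by simp [degree_prod, degree_qWeight hq0]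

theorem linearIndependent_qMonomial (hq0 : q ≠ 0) : LinearIndependent K (qMonomial K q) := by
  have hsingle : LinearIndependent K fun ix : Σ _ : ℤ, ℕ =>
      Finsupp.single ix.1 (qWeightProd q hq0 ix.2) :=
    Finsupp.linearIndependent_single (φ := fun _ : ℤ => ℕ) (fun _ => qWeightProd q hq0)
      fun _ => (qWeightProd q hq0).linearIndependent
  have hinj : Function.Injective fun p : ℕ × ℕ => (⟨(p.1 : ℤ) - p.2, p.2⟩ : Σ _ : ℤ, ℕ) := by
    rintro ⟨m, n⟩ ⟨m', n'⟩ h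
    simp only [Sigma.mk.inj_iff, heq_eq_eq] at h
    ext <;> omega
  refine LinearIndependent.of_comp
    (LinearMap.applyₗ (Finsupp.single 0 1) ∘ₗ (qWeylRep hq0).toLinearMap) ?_
  convert hsingle.comp _ hinj
  exact funext (qWeylRep_qMonomial_single hq0)

variable (q) in
noncomputable def qMonomialBasis (hq0 : q ≠ 0) : Module.Basis (ℕ × ℕ) K (qWeyl K q) :=
  Module.Basis.mk (linearIndependent_qMonomial hq0) span_qMonomial.ge

@[simp]
theorem qMonomialBasis_apply (hq0 : q ≠ 0) (p : ℕ × ℕ) :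
    qMonomialBasis q hq0 p = qMonomial K q p :=
  Module.Basis.mk_apply _ _ _

@[simp]
theorem qMonomialBasis_repr_qMonomial (hq0 : q ≠ 0) (p : ℕ × ℕ) :
    (qMonomialBasis q hq0).repr (qMonomial K q p) = Finsupp.single p 1 := by
  rw [← qMonomialBasis_apply hq0, Module.Basis.repr_self]

theorem qX_commutator_qMonomial (p : ℕ × ℕ) :
    qX K q * qMonomial K q p - qMonomial K q p * qX K q =
      (1 - q ^ p.2) • (qMonomial K q (p.1 + 1, p.2) + qMonomial K q (p.1, p.2 - 1)) := by
  rw [qX_mul_qMonomial, qMonomial_mul_qX]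
  module

theorem qMonomialBasis_repr_commutator_qX_zero (hq0 : q ≠ 0) (z : qWeyl K q) (n : ℕ) :
    (qMonomialBasis q hq0).repr (qX K q * z - z * qX K q) (0, n) =
      (1 - q ^ (n + 1)) * (qMonomialBasis q hq0).repr z (0, n + 1) := by
  let b := qMonomialBasis q hq0
  have key : b.coord (0, n) ∘ₗ
      (LinearMap.mulLeft K (qX K q) - LinearMap.mulRight K (qX K q)) =
      (1 - q ^ (n + 1)) • b.coord (0, n + 1) := by
    refine b.ext fun p => ?_
    obtain ⟨m, k⟩ := p
    simp only [b, LinearMap.comp_apply, LinearMap.sub_apply, LinearMap.mulLeft_apply,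
      LinearMap.mulRight_apply, LinearMap.smul_apply, qMonomialBasis_apply,
      qX_commutator_qMonomial, Module.Basis.coord_apply, map_smul, map_add,
      qMonomialBasis_repr_qMonomial, Finsupp.single_apply, Prod.ext_iff]
    rcases k with _ | k
    · simp
    · split_ifs <;> simp_all
  exact LinearMap.congr_fun key z

theorem qMonomialBasis_repr_commutator_qX_succ (hq0 : q ≠ 0) (z : qWeyl K q) (m n : ℕ) :
    (qMonomialBasis q hq0).repr (qX K q * z - z * qX K q) (m + 1, n) =
      (1 - q ^ n) * (qMonomialBasis q hq0).repr z (m, n) +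
        (1 - q ^ (n + 1)) * (qMonomialBasis q hq0).repr z (m + 1, n + 1) := by
  let b := qMonomialBasis q hq0
  have key : b.coord (m + 1, n) ∘ₗ
      (LinearMap.mulLeft K (qX K q) - LinearMap.mulRight K (qX K q)) =
      (1 - q ^ n) • b.coord (m, n) + (1 - q ^ (n + 1)) • b.coord (m + 1, n + 1) := by
    refine b.ext fun p => ?_
    obtain ⟨i, k⟩ := p
    simp only [b, LinearMap.comp_apply, LinearMap.sub_apply, LinearMap.mulLeft_apply,
      LinearMap.mulRight_apply, LinearMap.add_apply, LinearMap.smul_apply, qMonomialBasis_apply,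
      qX_commutator_qMonomial, Module.Basis.coord_apply, map_smul, map_add,
      qMonomialBasis_repr_qMonomial, Finsupp.single_apply, Prod.ext_iff]
    rcases k with _ | k
    · simp +contextual [eq_comm]
    · split_ifs <;> simp_all
  exact LinearMap.congr_fun key z

theorem qMonomialBasis_repr_mul_eq_zero_of_commute_qX (hq0 : q ≠ 0) {z : qWeyl K q}
    (hz : Commute (qX K q) z) (m n : ℕ) :
    (qMonomialBasis q hq0).repr z (m, n) * (1 - q ^ n) = 0 := by
  have hδ : qX K q * z - z * qX K q = 0 := sub_eq_zero.mpr hz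
  induction m generalizing n with
  | zero =>
    cases n with
    | zero => simp
    | succ n =>
      simpa [hδ, mul_comm] using (qMonomialBasis_repr_commutator_qX_zero hq0 z n).symm
  | succ m ih =>
    cases n with
    | zero => simp
    | succ n =>
      have h := qMonomialBasis_repr_commutator_qX_succ hq0 z m n
      rwa [hδ, map_zero, Finsupp.coe_zero, Pi.zero_apply, mul_comm (1 - q ^ n), ih, zero_add,
        mul_comm, eq_comm] at h

theorem qMonomialBasis_repr_unop_qWeylFlip (hq0 : q ≠ 0) (z : qWeyl K q) (p : ℕ × ℕ) :
    (qMonomialBasis q hq0).repr (qWeylFlip K q z).unop p.swap =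
      (qMonomialBasis q hq0).repr z p := by
  let b := qMonomialBasis q hq0
  have key : b.coord p.swap ∘ₗ (MulOpposite.opLinearEquiv K).symm.toLinearMap ∘ₗ
      (qWeylFlip K q).toLinearMap = b.coord p := by
    refine b.ext fun r => ?_
    simp [b, qWeylFlip_qMonomial, Finsupp.single_apply]
  exact LinearMap.congr_fun key z

theorem qMonomialBasis_repr_mul_eq_zero_of_commute_qD (hq0 : q ≠ 0) {z : qWeyl K q}
    (hz : Commute (qD K q) z) (m n : ℕ) :
    (qMonomialBasis q hq0).repr z (m, n) * (1 - q ^ m) = 0 := by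
  have hflip : Commute (qX K q) (qWeylFlip K q z).unop := by
    simpa using (hz.map (qWeylFlip K q)).unop
  rw [← qMonomialBasis_repr_unop_qWeylFlip hq0 z (m, n)]
  exact qMonomialBasis_repr_mul_eq_zero_of_commute_qX hq0 hflip n m

theorem mem_center_of_commute_qX_qD {z : qWeyl K q} (hX : Commute z (qX K q))
    (hD : Commute z (qD K q)) : z ∈ Subalgebra.center K (qWeyl K q) := by
  refine Subalgebra.mem_center_iff.mpr fun a => ?_
  have ha : a ∈ Algebra.adjoin K {qX K q, qD K q} := by rw [adjoin_qX_qD]; trivial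
  refine (Algebra.commute_of_mem_adjoin_of_forall_mem_commute ha ?_).symm
  rintro _ (rfl | rfl)
  exacts [hX, hD]

theorem qX_pow_mem_center {l : ℕ} (hl : q ^ l = 1) :
    qX K q ^ l ∈ Subalgebra.center K (qWeyl K q) := by
  refine mem_center_of_commute_qX_qD ((Commute.refl _).pow_left l) ?_
  simp [Commute, SemiconjBy, qD_mul_qX_pow, hl]

theorem qD_pow_mem_center {l : ℕ} (hl : q ^ l = 1) :
    qD K q ^ l ∈ Subalgebra.center K (qWeyl K q) := by
  refine mem_center_of_commute_qX_qD ?_ ((Commute.refl _).pow_left l)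
  simp [Commute, SemiconjBy, qD_pow_mul_qX, hl]

theorem pow_eq_one_of_mem_support_of_mem_center (hq0 : q ≠ 0) {z : qWeyl K q}
    (hz : z ∈ Subalgebra.center K (qWeyl K q)) {p : ℕ × ℕ}
    (hp : p ∈ ((qMonomialBasis q hq0).repr z).support) : q ^ p.1 = 1 ∧ q ^ p.2 = 1 := by
  have hc := Finsupp.mem_support_iff.mp hp
  have hX := qMonomialBasis_repr_mul_eq_zero_of_commute_qX hq0
    (Subalgebra.mem_center_iff.mp hz (qX K q)) p.1 p.2
  have hD := qMonomialBasis_repr_mul_eq_zero_of_commute_qD hq0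
    (Subalgebra.mem_center_iff.mp hz (qD K q)) p.1 p.2
  constructor
  · exact (sub_eq_zero.mp ((mul_eq_zero.mp hD).resolve_left hc)).symm
  · exact (sub_eq_zero.mp ((mul_eq_zero.mp hX).resolve_left hc)).symm

end QWeyl

theorem stmt6_general (K : Type) [Field K] (l : ℕ) (hl : 1 < l) (q : K) (hq : IsPrimitiveRoot q l) :
    Subalgebra.center K (qWeyl K q) =
      Algebra.adjoin K {(qX K q) ^ l, (qD K q) ^ l} := by
  have hq0 : q ≠ 0 := hq.ne_zero (by omega)
  apply le_antisymm
  · intro z hz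
    rw [← (qMonomialBasis q hq0).linearCombination_repr z, Finsupp.linearCombination_apply]
    refine Subalgebra.sum_mem _ fun p hp => Subalgebra.smul_mem _ ?_ _
    obtain ⟨h₁, h₂⟩ := pow_eq_one_of_mem_support_of_mem_center hq0 hz hp
    obtain ⟨a, ha⟩ := hq.dvd_of_pow_eq_one _ h₁
    obtain ⟨b, hb⟩ := hq.dvd_of_pow_eq_one _ h₂
    rw [qMonomialBasis_apply, qMonomial, ha, hb, pow_mul, pow_mul]
    exact mul_mem (pow_mem (Algebra.subset_adjoin (Set.mem_insert _ _)) a)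
      (pow_mem (Algebra.subset_adjoin (Set.mem_insert_of_mem _ (Set.mem_singleton _))) b)
  · rw [Algebra.adjoin_le_iff]
    rintro _ (rfl | rfl)
    exacts [qX_pow_mem_center hq.pow_eq_one, qD_pow_mem_center hq.pow_eq_one]

/-- For `q` a primitive `l`-th root of unity (`l > 1` odd) in an algebraically closed field of
characteristic zero, the center of the `q`-Weyl algebra is the subalgebra generated by
`xˡ` and `∂ˡ`. -/
theorem stmt6 (K : Type) [Field K] [IsAlgClosed K] [CharZero K]
    (l : ℕ) (hl : 1 < l) (hodd : Odd l) (q : K) (hq : IsPrimitiveRoot q l) :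
    Subalgebra.center K (qWeyl K q) =
      Algebra.adjoin K {(qX K q) ^ l, (qD K q) ^ l} :=
  stmt6_general K l hl q hq
end

section
/- Let K be an algebraically closed field, l > 1, q ∈ K a primitive l-th root of unity, and ζ = (a, ω) ∈ K². Let D_{q,ζ} be the algebra K⟨x,∂⟩/(∂x - q x ∂ - (q-1), xˡ - a, ∂ˡ - ω). If 1 + aω ≠ 0 and a ≠ 0, then D_{q,ζ} is isomorphic to the matrix algebra M_l(K). -/
/-- The defining relations of the fiber `D_{q,ζ}` of the `q`-Weyl algebra over the point
`ζ = (a, ω)` of the spectrum of its `l`-center: `∂x = q x∂ + (q-1)`, `xˡ = a`, `∂ˡ = ω`. -/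
inductive qWeylFiberRel (K : Type) [CommRing K] (q a ω : K) (l : ℕ) :
    FreeAlgebra K (Fin 2) → FreeAlgebra K (Fin 2) → Prop
  | weyl : qWeylFiberRel K q a ω l (FreeAlgebra.ι K 1 * FreeAlgebra.ι K 0)
      (q • (FreeAlgebra.ι K 0 * FreeAlgebra.ι K 1) + (q - 1) • (1 : FreeAlgebra K (Fin 2)))
  | xl : qWeylFiberRel K q a ω l ((FreeAlgebra.ι K (0 : Fin 2)) ^ l)
      (algebraMap K (FreeAlgebra K (Fin 2)) a)
  | dl : qWeylFiberRel K q a ω l ((FreeAlgebra.ι K (1 : Fin 2)) ^ l)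
      (algebraMap K (FreeAlgebra K (Fin 2)) ω)

/-- The fiber algebra `D_{q,ζ} = K⟨x,∂⟩/(∂x - q x ∂ - (q-1), xˡ - a, ∂ˡ - ω)`. -/
abbrev qWeylFiber (K : Type) [CommRing K] (q a ω : K) (l : ℕ) : Type :=
  RingQuot (qWeylFiberRel K q a ω l)

/-!
The fiber is spanned by the `l²` monomials `xⁱ∂ʲ` with `i, j < l`, so it suffices to find a
representation of it on `Kˡ` whose image is all of `M_l(K)`. Choose `αˡ = a` and
`cˡ = ω + a⁻¹` (so `c ≠ 0` exactly when `1 + aω ≠ 0`), let `x` act by `α` times the cyclic shift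
`eᵢ ↦ eᵢ₊₁` and `∂` by the backward shift with weights `βᵢ = qⁱc - α⁻¹`. Then `x∂` is diagonal with
the pairwise distinct eigenvalues `qⁱαc - 1`, so the image contains every diagonal matrix unit,
and together with the shift it contains every matrix unit.
-/

open Polynomial in
theorem IsPrimitiveRoot.prod_range_sub_pow_mul_eq_pow_sub_pow {R : Type*} [CommRing R] [IsDomain R]
    {q : R} {l : ℕ} (hq : IsPrimitiveRoot q l) (hl : 0 < l) (x y : R) :
    ∏ i ∈ Finset.range l, (x - q ^ i * y) = x ^ l - y ^ l := by
  have h := congrArg (eval x) (X_pow_sub_C_eq_prod hq hl (rfl : y ^ l = _))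
  simpa [eval_prod] using h.symm

section CyclicShift

open Fin.NatCast Fin.CommRing Matrix

open Polynomial in
theorem Matrix.aeval_diagonal {n R : Type*} [Fintype n] [DecidableEq n] [CommRing R]
    (d : n → R) (p : R[X]) : aeval (diagonal d) p = diagonal fun j => p.eval (d j) := by
  change aeval (diagonalAlgHom R d) p = _
  rw [aeval_algHom_apply, aeval_pi_apply]
  rfl

open Polynomial in
theorem Matrix.single_mem_of_diagonal_mem {n K : Type*} [Fintype n] [DecidableEq n] [Field K]
    {S : Subalgebra K (Matrix n n K)} {d : n → K} (hd : Function.Injective d)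
    (hS : diagonal d ∈ S) (i : n) : single i i 1 ∈ S := by
  have hLagrange : aeval (diagonal d) (Lagrange.basis Finset.univ d i) = single i i 1 := by
    rw [aeval_diagonal, ← diagonal_single]
    congr 1
    ext j
    rcases eq_or_ne i j with rfl | hij
    · simp [Lagrange.eval_basis_self hd.injOn]
    · simp [Lagrange.eval_basis_of_ne hij, hij.symm]
  rw [← hLagrange]
  exact Algebra.adjoin_le (Set.singleton_subset_iff.mpr hS) (aeval_mem_adjoin_singleton K _)

variable {R : Type*} [CommRing R] {l : ℕ} [NeZero l]

def shiftMatrix (α : R) : Matrix (Fin l) (Fin l) R :=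
  of fun i j => if i = j + 1 then α else 0

def unshiftMatrix (β : Fin l → R) : Matrix (Fin l) (Fin l) R :=
  of fun i j => if j = i + 1 then β j else 0

theorem shiftMatrix_pow (α : R) (m : ℕ) :
    shiftMatrix (l := l) α ^ m = of fun i j : Fin l => if i = j + m then α ^ m else 0 := by
  induction m with
  | zero => ext i j; simp [one_apply]
  | succ m ih =>
    ext i j
    rw [pow_succ', ih, mul_apply]
    simp [shiftMatrix, ite_mul, pow_succ', add_assoc]

theorem unshiftMatrix_pow (β : Fin l → R) (m : ℕ) :
    unshiftMatrix β ^ m = of fun i j : Fin l =>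
      if j = i + m then ∏ t ∈ Finset.range m, β (i + t + 1) else 0 := by
  induction m with
  | zero => ext i j; simp [one_apply, eq_comm]
  | succ m ih =>
    ext i j
    rw [pow_succ', ih, mul_apply]
    simp only [unshiftMatrix, of_apply, ite_mul, zero_mul, Finset.sum_ite_eq', Finset.mem_univ,
      if_true]
    simp [Finset.prod_range_succ', add_assoc, add_comm (1 : Fin l), mul_comm]

theorem shiftMatrix_pow_self (α : R) :
    shiftMatrix (l := l) α ^ l = algebraMap R (Matrix (Fin l) (Fin l) R) (α ^ l) := by
  ext i j
  rcases eq_or_ne i j with rfl | h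
  · simp [shiftMatrix_pow, algebraMap_matrix_apply]
  · simp [shiftMatrix_pow, algebraMap_matrix_apply, h]

theorem unshiftMatrix_pow_self (β : Fin l → R) :
    unshiftMatrix β ^ l = algebraMap R (Matrix (Fin l) (Fin l) R) (∏ i, β i) := by
  have hprod (i : Fin l) : ∏ t ∈ Finset.range l, β (i + t + 1) = ∏ t, β t := by
    rw [← Fin.prod_univ_eq_prod_range (fun t : ℕ => β (i + t + 1)),
      ← Equiv.prod_comp (Equiv.addRight (i + 1)) β]
    simp only [Fin.cast_val_eq_self, Equiv.coe_addRight]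
    exact Finset.prod_congr rfl fun t _ => by ring_nf
  ext i j
  rcases eq_or_ne i j with rfl | h
  · simp [unshiftMatrix_pow, algebraMap_matrix_apply, hprod]
  · simp [unshiftMatrix_pow, algebraMap_matrix_apply, h, Ne.symm h]

theorem unshiftMatrix_mul_shiftMatrix (α : R) (β : Fin l → R) :
    unshiftMatrix β * shiftMatrix α = diagonal fun i => α * β (i + 1) := by
  ext i j
  rcases eq_or_ne i j with rfl | h
  · simp [unshiftMatrix, shiftMatrix, mul_apply, mul_comm]
  · simp [unshiftMatrix, shiftMatrix, mul_apply, h, Ne.symm h]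

theorem shiftMatrix_mul_unshiftMatrix (α : R) (β : Fin l → R) :
    shiftMatrix α * unshiftMatrix β = diagonal fun i => α * β i := by
  ext i j
  rcases eq_or_ne i j with rfl | h
  · simp [unshiftMatrix, shiftMatrix, mul_apply, ← sub_eq_iff_eq_add]
  · simp [unshiftMatrix, shiftMatrix, mul_apply, h, ← sub_eq_iff_eq_add]

theorem unshiftMatrix_mul_shiftMatrix_eq {q α : R} {β : Fin l → R}
    (hβ : ∀ i, α * β (i + 1) = q * (α * β i) + (q - 1)) :
    unshiftMatrix β * shiftMatrix α = q • (shiftMatrix α * unshiftMatrix β) + (q - 1) • 1 := by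
  rw [unshiftMatrix_mul_shiftMatrix, shiftMatrix_mul_unshiftMatrix, ← diagonal_one,
    ← diagonal_smul, ← diagonal_smul, diagonal_add]
  congr 1
  ext i
  simp [hβ]

theorem shiftMatrix_pow_mul_single (α : R) (m : ℕ) (j : Fin l) :
    shiftMatrix α ^ m * single j j 1 = single (j + m) j (α ^ m) := by
  ext r s
  rcases eq_or_ne s j with rfl | h
  · simp [shiftMatrix_pow, single_apply, eq_comm]
  · simp [h, h.symm]

theorem adjoin_shiftMatrix_unshiftMatrix {K : Type*} [Field K] {α : K} {β : Fin l → K}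
    (hα : α ≠ 0) (hβ : Function.Injective fun i => α * β i) :
    Algebra.adjoin K {shiftMatrix α, unshiftMatrix β} = ⊤ := by
  set S := Algebra.adjoin K {shiftMatrix α, unshiftMatrix β}
  have hX : shiftMatrix α ∈ S := Algebra.subset_adjoin (by simp)
  have hD : unshiftMatrix β ∈ S := Algebra.subset_adjoin (by simp)
  have hdiag (j : Fin l) : single j j 1 ∈ S :=
    single_mem_of_diagonal_mem hβ (shiftMatrix_mul_unshiftMatrix α β ▸ mul_mem hX hD) j
  have hsingle (i j : Fin l) (x : K) : single i j x ∈ S := by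
    have hij : single i j x = (x / α ^ (i - j : Fin l).val) •
        (shiftMatrix α ^ (i - j : Fin l).val * single j j 1) := by
      rw [shiftMatrix_pow_mul_single, smul_single, smul_eq_mul,
        div_mul_cancel₀ _ (pow_ne_zero _ hα), Fin.cast_val_eq_self, add_sub_cancel]
    rw [hij]
    exact S.smul_mem (mul_mem (pow_mem hX _) (hdiag j)) _
  exact eq_top_iff.mpr fun M _ => M.induction_on' S.zero_mem (fun _ _ => S.add_mem) hsingle

end CyclicShift

section FiberWeight

open Fin.NatCast Fin.CommRing

theorem IsPrimitiveRoot.pow_val_add_one {M : Type*} [CommMonoid M] {q : M} {l : ℕ} [NeZero l]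
    (hq : IsPrimitiveRoot q l) (i : Fin l) : q ^ ((i + 1 : Fin l) : ℕ) = q ^ (i : ℕ) * q := by
  have hmod (n : ℕ) : q ^ (n % l) = q ^ n := hq.eq_orderOf ▸ pow_mod_orderOf q n
  rw [Fin.val_add, hmod, pow_add, Fin.val_one', hmod, pow_one]

variable {K : Type*} [Field K] {l : ℕ} {q α c : K}

def fiberWeight (q α c : K) (i : Fin l) : K :=
  q ^ (i : ℕ) * c - α⁻¹

theorem mul_fiberWeight_add_one [NeZero l] (hq : IsPrimitiveRoot q l) (hα : α ≠ 0) (i : Fin l) :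
    α * fiberWeight q α c (i + 1) = q * (α * fiberWeight q α c i) + (q - 1) := by
  simp only [fiberWeight, hq.pow_val_add_one, mul_sub, mul_inv_cancel₀ hα]
  ring

theorem injective_mul_fiberWeight (hq : IsPrimitiveRoot q l) (hα : α ≠ 0) (hc : c ≠ 0) :
    Function.Injective fun i : Fin l => α * fiberWeight q α c i := by
  intro i j hij
  simp only [fiberWeight, mul_right_inj' hα, sub_left_inj, mul_left_inj' hc] at hij
  exact Fin.ext (hq.pow_inj i.2 j.2 hij)

theorem prod_fiberWeight (hq : IsPrimitiveRoot q l) (hodd : Odd l) :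
    ∏ i : Fin l, fiberWeight q α c i = c ^ l - (α ^ l)⁻¹ := by
  simp only [fiberWeight]
  rw [Fin.prod_univ_eq_prod_range (fun i => q ^ i * c - α⁻¹)]
  have h := hq.prod_range_sub_pow_mul_eq_pow_sub_pow hodd.pos (-α⁻¹) (-c)
  simpa only [mul_neg, sub_neg_eq_add, hodd.neg_pow, inv_pow, neg_add_eq_sub] using h

end FiberWeight

theorem Submodule.span_eq_top_of_one_mem_of_mul_mem {R A : Type*} [CommSemiring R] [Semiring A]
    [Algebra R A] {s t : Set A} (hs : Algebra.adjoin R s = ⊤) (h1 : 1 ∈ span R t)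
    (hmul : ∀ a ∈ s, ∀ v ∈ t, a * v ∈ span R t) : span R t = ⊤ := by
  have key (u : A) (hu : u ∈ Algebra.adjoin R s) : ∀ v ∈ span R t, u * v ∈ span R t := by
    induction hu using Algebra.adjoin_induction with
    | mem a ha =>
      exact span_le (p := (span R t).comap (LinearMap.mulLeft R a)) |>.mpr (hmul a ha)
    | algebraMap r => exact fun v hv => by simpa [Algebra.smul_def] using smul_mem _ r hv
    | add u w _ _ hu hw => exact fun v hv => by simpa [add_mul] using add_mem (hu v hv) (hw v hv)
    | mul u w _ _ hu hw => exact fun v hv => by simpa [mul_assoc] using hu _ (hw v hv)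
  refine eq_top_iff.mpr fun u _ => ?_
  simpa using key u (hs ▸ Algebra.mem_top) 1 h1

namespace qWeylFiber

variable {K : Type} [CommRing K] {q a ω : K} {l : ℕ}

def x : qWeylFiber K q a ω l := RingQuot.mkAlgHom K _ (FreeAlgebra.ι K 0)

def d : qWeylFiber K q a ω l := RingQuot.mkAlgHom K _ (FreeAlgebra.ι K 1)

theorem d_mul_x : (d : qWeylFiber K q a ω l) * x = q • (x * d) + (q - 1) • 1 := by
  simpa [x, d] using
    RingQuot.mkAlgHom_rel K (qWeylFiberRel.weyl (q := q) (a := a) (ω := ω) (l := l))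

theorem x_pow : (x : qWeylFiber K q a ω l) ^ l = algebraMap K _ a := by
  simpa [x, d] using
    RingQuot.mkAlgHom_rel K (qWeylFiberRel.xl (q := q) (a := a) (ω := ω) (l := l))

theorem d_pow : (d : qWeylFiber K q a ω l) ^ l = algebraMap K _ ω := by
  simpa [x, d] using
    RingQuot.mkAlgHom_rel K (qWeylFiberRel.dl (q := q) (a := a) (ω := ω) (l := l))

theorem d_mul_x_pow_succ (n : ℕ) : (d : qWeylFiber K q a ω l) * x ^ (n + 1) =
    q ^ (n + 1) • (x ^ (n + 1) * d) + (q ^ (n + 1) - 1) • x ^ n := by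
  induction n with
  | zero => simpa using d_mul_x
  | succ n ih =>
    calc d * x ^ (n + 2) = (d * x ^ (n + 1)) * x := by rw [pow_succ _ (n + 1), mul_assoc]
      _ = q ^ (n + 1) • (x ^ (n + 1) * (d * x)) + (q ^ (n + 1) - 1) • x ^ (n + 1) := by
        rw [ih, add_mul, smul_mul_assoc, smul_mul_assoc, mul_assoc, ← pow_succ]
      _ = q ^ (n + 2) • (x ^ (n + 2) * d) + (q ^ (n + 2) - 1) • x ^ (n + 1) := by
        rw [d_mul_x, mul_add, mul_smul_comm, mul_smul_comm, mul_one, ← mul_assoc, ← pow_succ,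
          smul_add, smul_smul, smul_smul, add_assoc, ← add_smul]
        congr 2 <;> ring

theorem adjoin_x_d : Algebra.adjoin K {(x : qWeylFiber K q a ω l), d} = ⊤ := by
  have hrange : {(x : qWeylFiber K q a ω l), d} =
      RingQuot.mkAlgHom K (qWeylFiberRel K q a ω l) '' Set.range (FreeAlgebra.ι K) := by
    ext y
    simp [Fin.exists_fin_two, x, d, eq_comm]
  rw [hrange, Algebra.adjoin_image, FreeAlgebra.adjoin_range_ι, Algebra.map_top,
    AlgHom.range_eq_top]
  exact RingQuot.mkAlgHom_surjective K _

theorem span_x_pow_mul_d_pow [NeZero l] : Submodule.span K (Set.range fun p : Fin l × Fin l =>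
    (x : qWeylFiber K q a ω l) ^ (p.1 : ℕ) * d ^ (p.2 : ℕ)) = ⊤ := by
  set V := Submodule.span K (Set.range fun p : Fin l × Fin l =>
    (x : qWeylFiber K q a ω l) ^ (p.1 : ℕ) * d ^ (p.2 : ℕ))
  have hpos : 0 < l := Nat.pos_of_neZero l
  have hmem (i j : ℕ) (hi : i < l) (hj : j < l) : x ^ i * d ^ j ∈ V :=
    Submodule.subset_span ⟨(⟨i, hi⟩, ⟨j, hj⟩), rfl⟩
  have hmem_le (i j : ℕ) (hi : i ≤ l) (hj : j ≤ l) : x ^ i * d ^ j ∈ V := by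
    rcases hi.lt_or_eq with hi | rfl <;> rcases hj.lt_or_eq with hj | rfl
    · exact hmem i j hi hj
    · simpa [d_pow, Algebra.smul_def, Algebra.commutes] using V.smul_mem ω (hmem i 0 hi hpos)
    · simpa [x_pow, Algebra.smul_def] using V.smul_mem a (hmem 0 j hpos hj)
    · simpa [x_pow, d_pow, Algebra.smul_def] using V.smul_mem (a * ω) (hmem 0 0 hpos hpos)
  refine Submodule.span_eq_top_of_one_mem_of_mul_mem adjoin_x_d
    (by simpa using hmem 0 0 hpos hpos) ?_
  rintro _ (rfl | rfl) _ ⟨⟨i, j⟩, rfl⟩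
  · simpa [← mul_assoc, ← pow_succ'] using hmem_le (i + 1) j i.2 j.2.le
  · obtain ⟨_ | k, hi⟩ := i
    · simpa [← pow_succ'] using hmem_le 0 (j + 1) hpos.le j.2
    · simp only [← mul_assoc, d_mul_x_pow_succ, add_mul, smul_mul_assoc]
      simp only [mul_assoc, ← pow_succ']
      exact add_mem (V.smul_mem _ (hmem_le _ _ hi.le j.2))
        (V.smul_mem _ (hmem_le _ _ (by omega) j.2.le))

instance [NeZero l] : Module.Finite K (qWeylFiber K q a ω l) :=
  ⟨by rw [← span_x_pow_mul_d_pow]; exact Submodule.fg_span (Set.finite_range _)⟩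

theorem finrank_le [NeZero l] [StrongRankCondition K] :
    Module.finrank K (qWeylFiber K q a ω l) ≤ l * l := by
  have h := finrank_range_le_card (R := K) fun p : Fin l × Fin l =>
    (x : qWeylFiber K q a ω l) ^ (p.1 : ℕ) * d ^ (p.2 : ℕ)
  rwa [Set.finrank, span_x_pow_mul_d_pow, finrank_top, Fintype.card_prod, Fintype.card_fin] at h

variable {A : Type*} [Semiring A] [Algebra K A]

def lift (X D : A) (hweyl : D * X = q • (X * D) + (q - 1) • 1)
    (hX : X ^ l = algebraMap K A a) (hD : D ^ l = algebraMap K A ω) :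
    qWeylFiber K q a ω l →ₐ[K] A :=
  RingQuot.liftAlgHom K ⟨FreeAlgebra.lift K ![X, D], fun _ _ h => by cases h <;> simpa⟩

variable {X D : A} {hweyl : D * X = q • (X * D) + (q - 1) • 1}
  {hX : X ^ l = algebraMap K A a} {hD : D ^ l = algebraMap K A ω}

@[simp]
theorem lift_x : lift X D hweyl hX hD x = X := by
  simp [lift, x]

@[simp]
theorem lift_d : lift X D hweyl hX hD d = D := by
  simp [lift, d]

theorem lift_surjective (h : Algebra.adjoin K {X, D} = ⊤) :
    Function.Surjective (lift X D hweyl hX hD) := by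
  rw [← AlgHom.range_eq_top, eq_top_iff, ← h, Algebra.adjoin_le_iff]
  rintro _ (rfl | rfl)
  exacts [⟨x, lift_x⟩, ⟨d, lift_d⟩]

end qWeylFiber

namespace qWeylFiber

theorem nonempty_algEquiv_matrix {K : Type} [Field K] {q a ω : K} {l : ℕ} [NeZero l]
    (X D : Matrix (Fin l) (Fin l) K) (hweyl : D * X = q • (X * D) + (q - 1) • 1)
    (hX : X ^ l = algebraMap K _ a) (hD : D ^ l = algebraMap K _ ω)
    (hgen : Algebra.adjoin K {X, D} = ⊤) :
    Nonempty (qWeylFiber K q a ω l ≃ₐ[K] Matrix (Fin l) (Fin l) K) := by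
  let φ := lift X D hweyl hX hD
  have hdim : Module.finrank K (qWeylFiber K q a ω l) ≤
      Module.finrank K (Matrix (Fin l) (Fin l) K) := by
    simpa [Module.finrank_matrix] using finrank_le
  exact ⟨AlgEquiv.ofBijective φ <|
    OrzechProperty.bijective_of_surjective_of_finrank_le φ.toLinearMap (lift_surjective hgen) hdim⟩

end qWeylFiber

theorem stmt9_general (K : Type) [Field K] [IsAlgClosed K]
    (l : ℕ) (hodd : Odd l) (q : K) (hq : IsPrimitiveRoot q l)
    (a ω : K) (ha : a ≠ 0) (haω : 1 + a * ω ≠ 0) :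
    Nonempty (qWeylFiber K q a ω l ≃ₐ[K] Matrix (Fin l) (Fin l) K) := by
  have : NeZero l := ⟨hodd.pos.ne'⟩
  obtain ⟨α, rfl⟩ := IsAlgClosed.exists_pow_nat_eq a hodd.pos
  have hα : α ≠ 0 := by rintro rfl; simp [hodd.pos.ne'] at ha
  obtain ⟨c, hc⟩ := IsAlgClosed.exists_pow_nat_eq (ω + (α ^ l)⁻¹) hodd.pos
  have hc0 : c ≠ 0 := by
    rintro rfl
    refine haω ?_
    calc 1 + α ^ l * ω = α ^ l * (ω + (α ^ l)⁻¹) := by field_simp; ring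
      _ = 0 := by rw [← hc, zero_pow hodd.pos.ne', mul_zero]
  exact qWeylFiber.nonempty_algEquiv_matrix (shiftMatrix α) (unshiftMatrix (fiberWeight q α c))
    (unshiftMatrix_mul_shiftMatrix_eq (mul_fiberWeight_add_one hq hα)) (shiftMatrix_pow_self α)
    (by rw [unshiftMatrix_pow_self, prod_fiberWeight hq hodd, hc, add_sub_cancel_right])
    (adjoin_shiftMatrix_unshiftMatrix hα (injective_mul_fiberWeight hq hα hc0))

/-- For `q` a primitive `l`-th root of unity (`l > 1` odd, char 0, `K` algebraically closed),
if `a ≠ 0` and `1 + aω ≠ 0`, then the fiber algebra `D_{q,(a,ω)}` is isomorphic to the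
matrix algebra `M_l(K)`. -/
theorem stmt9 (K : Type) [Field K] [IsAlgClosed K] [CharZero K]
    (l : ℕ) (hl : 1 < l) (hodd : Odd l) (q : K) (hq : IsPrimitiveRoot q l)
    (a ω : K) (ha : a ≠ 0) (haω : 1 + a * ω ≠ 0) :
    Nonempty (qWeylFiber K q a ω l ≃ₐ[K] Matrix (Fin l) (Fin l) K) :=
  stmt9_general K l hodd q hq a ω ha haω
end

section
/- Let K be an algebraically closed field, l > 1, q a primitive l-th root of unity, and ζ = (0,0). Then the fiber algebra D_{q,ζ} = K⟨x,∂⟩/(∂x - q x ∂ - (q-1), xˡ, ∂ˡ) has the l-dimensional module K[x]/(xˡ), with x acting by multiplication and ∂ acting as the q-derivative sending xⁿ to (qⁿ-1)xⁿ⁻¹; this module is irreducible. -/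
/-! `∂` is nilpotent, so a nonzero subspace stable under `∂` contains a nonzero vector killed
by `∂`. As `qⁿ ≠ 1` for `0 < n < l`, the kernel of `∂` is spanned by `1`, which generates
`K[x]/(xˡ)` under multiplication by `x`. The relation `∂x = qx∂ + (q-1)` holds because `x∂`
and `∂x` both act diagonally, on `xⁿ` by `qⁿ - 1` and by `qⁿ⁺¹ - 1` (which vanishes for
`n = l - 1` since `qˡ = 1`). -/

theorem Module.End.exists_ne_zero_mem_ker_of_isNilpotent {R M : Type*} [Semiring R]
    [AddCommMonoid M] [Module R M] {f : Module.End R M} (hf : IsNilpotent f)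
    {W : Submodule R M} (hW : ∀ w ∈ W, f w ∈ W) {w : M} (hw : w ∈ W) (hw0 : w ≠ 0) :
    ∃ u ∈ W, u ≠ 0 ∧ f u = 0 := by
  obtain ⟨n, hn⟩ := hf
  have of_pow_apply_eq_zero : ∀ k : ℕ, ∀ w ∈ W, (f ^ k) w = 0 → w ≠ 0 → ∃ u ∈ W, u ≠ 0 ∧ f u = 0 := by
    intro k
    induction k with
    | zero => exact fun w _ h h0 => absurd h h0
    | succ k ih =>
      intro w hw hk hw0
      by_cases hfw : f w = 0
      · exact ⟨w, hw, hw0, hfw⟩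
      · exact ih (f w) (hW w hw) (by rwa [pow_succ, Module.End.mul_apply] at hk) hfw
  exact of_pow_apply_eq_zero n w hw (by simp [hn]) hw0

namespace QWeylFiber

section

variable (K : Type*) [Field K] (l : ℕ)

def mulX : Module.End K (Fin l → K) where
  toFun v i := if (i : ℕ) = 0 then 0 else v ⟨(i : ℕ) - 1, lt_of_le_of_lt (Nat.sub_le _ _) i.isLt⟩
  map_add' v w := by funext i; by_cases h : (i : ℕ) = 0 <;> simp [h]
  map_smul' c v := by funext i; by_cases h : (i : ℕ) = 0 <;> simp [h]

variable {K}

def qDeriv (q : K) : Module.End K (Fin l → K) where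
  toFun v i := if h : (i : ℕ) + 1 < l then (q ^ ((i : ℕ) + 1) - 1) * v ⟨(i : ℕ) + 1, h⟩ else 0
  map_add' v w := by funext i; by_cases h : (i : ℕ) + 1 < l <;> simp [h]; ring
  map_smul' c v := by funext i; by_cases h : (i : ℕ) + 1 < l <;> simp [h]; ring

variable {l}

theorem mulX_apply (v : Fin l → K) (i : Fin l) :
    mulX K l v i = if (i : ℕ) = 0 then 0
      else v ⟨(i : ℕ) - 1, lt_of_le_of_lt (Nat.sub_le _ _) i.isLt⟩ := rfl

theorem qDeriv_apply (q : K) (v : Fin l → K) (i : Fin l) :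
    qDeriv l q v i = if h : (i : ℕ) + 1 < l then (q ^ ((i : ℕ) + 1) - 1) * v ⟨(i : ℕ) + 1, h⟩
      else 0 := rfl

theorem mulX_pow_apply (k : ℕ) (v : Fin l → K) (i : Fin l) :
    (mulX K l ^ k) v i = if h : k ≤ (i : ℕ) then v ⟨(i : ℕ) - k, by omega⟩ else 0 := by
  induction k generalizing i with
  | zero => simp
  | succ k ih =>
    rw [pow_succ', Module.End.mul_apply, mulX_apply]
    split_ifs with h0 h1 h1
    · omega
    · rfl
    · rw [ih, dif_pos (by simp; omega)]
      congr 2; simp; omega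
    · rw [ih, dif_neg (by simp; omega)]

theorem mulX_pow_self : mulX K l ^ l = 0 := by
  refine LinearMap.ext fun v => funext fun i => ?_
  simp [mulX_pow_apply, i.isLt]

theorem mulX_pow_single_zero [NeZero l] (i : Fin l) :
    (mulX K l ^ (i : ℕ)) (Pi.single 0 1) = Pi.single i 1 := by
  ext j
  rw [mulX_pow_apply]
  split_ifs with h
  · simp only [Pi.single_apply, Fin.ext_iff, Fin.val_zero]
    exact if_congr (by omega) rfl rfl
  · rw [Pi.single_eq_of_ne (by rintro rfl; exact h le_rfl)]

theorem qDeriv_pow_apply_eq_zero (q : K) (k : ℕ) (v : Fin l → K) (i : Fin l)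
    (h : l ≤ (i : ℕ) + k) : (qDeriv l q ^ k) v i = 0 := by
  induction k generalizing i with
  | zero => omega
  | succ k ih =>
    rw [pow_succ', Module.End.mul_apply, qDeriv_apply]
    split_ifs with h1
    · rw [ih _ (by simp; omega), mul_zero]
    · rfl

theorem qDeriv_pow_self (q : K) : qDeriv l q ^ l = 0 :=
  LinearMap.ext fun v => funext fun i => qDeriv_pow_apply_eq_zero q l v i (by omega)

theorem mulX_mul_qDeriv_apply (q : K) (v : Fin l → K) (i : Fin l) :
    (mulX K l * qDeriv l q) v i = (q ^ (i : ℕ) - 1) * v i := by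
  rw [Module.End.mul_apply, mulX_apply, qDeriv_apply]
  split_ifs with h0 h1
  · simp [h0]
  · have hi : (i : ℕ) - 1 + 1 = i := by omega
    simp only [hi, Fin.eta]
  · exact absurd (by simp only; omega) h1

theorem qDeriv_mul_mulX_apply {q : K} (hq : q ^ l = 1) (v : Fin l → K) (i : Fin l) :
    (qDeriv l q * mulX K l) v i = (q ^ ((i : ℕ) + 1) - 1) * v i := by
  rw [Module.End.mul_apply, qDeriv_apply]
  split_ifs with h
  · rw [mulX_apply, if_neg (by simp)]
    rfl
  · rw [show (i : ℕ) + 1 = l by omega, hq, sub_self, zero_mul]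

theorem qDeriv_mul_mulX {q : K} (hq : q ^ l = 1) :
    qDeriv l q * mulX K l = q • (mulX K l * qDeriv l q) + (q - 1) • 1 := by
  refine LinearMap.ext fun v => funext fun i => ?_
  simp only [LinearMap.add_apply, LinearMap.smul_apply, Pi.add_apply, Pi.smul_apply,
    qDeriv_mul_mulX_apply hq, mulX_mul_qDeriv_apply, Module.End.one_apply, smul_eq_mul]
  ring

theorem eq_single_zero_of_qDeriv_eq_zero [NeZero l] {q : K} (hq : IsPrimitiveRoot q l)
    {v : Fin l → K} (hv : qDeriv l q v = 0) : v = Pi.single 0 (v 0) := by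
  ext j
  by_cases hj : j = 0
  · subst hj; simp
  have hj0 : (j : ℕ) ≠ 0 := Fin.val_ne_zero_iff.mpr hj
  have hj' : (j : ℕ) - 1 + 1 < l := by omega
  have hDv := congrFun hv ⟨(j : ℕ) - 1, by omega⟩
  rw [qDeriv_apply, dif_pos hj'] at hDv
  have hqj : q ^ ((j : ℕ) - 1 + 1) ≠ 1 := hq.pow_ne_one_of_pos_of_lt (by omega) hj'
  rw [Pi.single_eq_of_ne hj]
  have hj1 : (⟨(j : ℕ) - 1 + 1, hj'⟩ : Fin l) = j := by ext; simp; omega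
  rw [hj1] at hDv
  exact (mul_eq_zero.mp hDv).resolve_left (sub_ne_zero.mpr hqj)

theorem eq_bot_or_eq_top_of_forall_mem {q : K} (hq : IsPrimitiveRoot q l)
    (W : Submodule K (Fin l → K)) (hX : ∀ w ∈ W, mulX K l w ∈ W)
    (hD : ∀ w ∈ W, qDeriv l q w ∈ W) : W = ⊥ ∨ W = ⊤ := by
  refine or_iff_not_imp_left.mpr fun hW => ?_
  obtain ⟨w, hw, hw0⟩ := W.ne_bot_iff.mp hW
  obtain ⟨u, hu, hu0, hDu⟩ :=
    Module.End.exists_ne_zero_mem_ker_of_isNilpotent ⟨l, qDeriv_pow_self q⟩ hD hw hw0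
  obtain ⟨i, -⟩ := Function.ne_iff.mp hu0
  have : NeZero l := NeZero.of_pos i.pos
  obtain ⟨c, rfl⟩ : ∃ c, u = Pi.single 0 c := ⟨_, eq_single_zero_of_qDeriv_eq_zero hq hDu⟩
  have hc : c ≠ 0 := fun h => hu0 (by rw [h, Pi.single_zero])
  have hsingle : Pi.single 0 1 ∈ W := by
    have := W.smul_mem c⁻¹ hu
    rwa [← Pi.single_smul, smul_eq_mul, inv_mul_cancel₀ hc] at this
  rw [eq_top_iff, ← (Pi.basisFun K (Fin l)).span_eq, Submodule.span_le]
  rintro _ ⟨i, rfl⟩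
  rw [Pi.basisFun_apply, ← mulX_pow_single_zero]
  exact Module.End.pow_apply_mem_of_forall_mem _ hX _ hsingle

end

section

variable {K : Type} [Field K] {l : ℕ} {q : K}

def rep (hq : q ^ l = 1) : qWeylFiber K q 0 0 l →ₐ[K] Module.End K (Fin l → K) :=
  RingQuot.liftAlgHom K ⟨FreeAlgebra.lift K ![mulX K l, qDeriv l q], by
    rintro _ _ (⟨⟩ | ⟨⟩ | ⟨⟩) <;>
      simp [qDeriv_mul_mulX hq, mulX_pow_self, qDeriv_pow_self]⟩

theorem rep_x (hq : q ^ l = 1) :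
    rep hq (RingQuot.mkAlgHom K (qWeylFiberRel K q 0 0 l) (FreeAlgebra.ι K 0)) = mulX K l := by
  simp [rep]

theorem rep_d (hq : q ^ l = 1) :
    rep hq (RingQuot.mkAlgHom K (qWeylFiberRel K q 0 0 l) (FreeAlgebra.ι K 1)) = qDeriv l q := by
  simp [rep]

end

end QWeylFiber

theorem stmt10_general (K : Type) [Field K]
    (l : ℕ) (q : K) (hq : IsPrimitiveRoot q l) :
    ∃ ρ : qWeylFiber K q 0 0 l →ₐ[K] Module.End K (Fin l → K),
      (∀ (v : Fin l → K) (i : Fin l),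
        ρ (RingQuot.mkAlgHom K (qWeylFiberRel K q 0 0 l) (FreeAlgebra.ι K 0)) v i =
          if (i : ℕ) = 0 then 0 else v ⟨(i : ℕ) - 1, lt_of_le_of_lt (Nat.sub_le _ _) i.isLt⟩) ∧
      (∀ (v : Fin l → K) (i : Fin l),
        ρ (RingQuot.mkAlgHom K (qWeylFiberRel K q 0 0 l) (FreeAlgebra.ι K 1)) v i =
          if h : (i : ℕ) + 1 < l then (q ^ ((i : ℕ) + 1) - 1) * v ⟨(i : ℕ) + 1, h⟩ else 0) ∧
      (∀ W : Submodule K (Fin l → K),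
        (∀ (d : qWeylFiber K q 0 0 l) (w : Fin l → K), w ∈ W → ρ d w ∈ W) →
        W = ⊥ ∨ W = ⊤) := by
  open QWeylFiber in
  refine ⟨rep hq.pow_eq_one, fun v i => by rw [rep_x]; rfl, fun v i => by rw [rep_d]; rfl,
    fun W hW => eq_bot_or_eq_top_of_forall_mem hq W ?_ ?_⟩
  · simpa only [rep_x] using hW (RingQuot.mkAlgHom K _ (FreeAlgebra.ι K 0))
  · simpa only [rep_d] using hW (RingQuot.mkAlgHom K _ (FreeAlgebra.ι K 1))

/-- The fiber algebra `D_{q,(0,0)} = K⟨x,∂⟩/(∂x - q x∂ - (q-1), xˡ, ∂ˡ)` has an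
`l`-dimensional module `K[x]/(xˡ)` (modelled as `Fin l → K` via the basis `1,x,…,x^{l-1}`),
with `x` acting by multiplication and `∂` acting as the `q`-derivative `xⁿ ↦ (qⁿ-1)xⁿ⁻¹`;
this module is irreducible. -/
theorem stmt10 (K : Type) [Field K] [IsAlgClosed K] [CharZero K]
    (l : ℕ) (hl : 1 < l) (q : K) (hq : IsPrimitiveRoot q l) :
    ∃ ρ : qWeylFiber K q 0 0 l →ₐ[K] Module.End K (Fin l → K),
      (∀ (v : Fin l → K) (i : Fin l),
        ρ (RingQuot.mkAlgHom K (qWeylFiberRel K q 0 0 l) (FreeAlgebra.ι K 0)) v i =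
          if (i : ℕ) = 0 then 0 else v ⟨(i : ℕ) - 1, lt_of_le_of_lt (Nat.sub_le _ _) i.isLt⟩) ∧
      (∀ (v : Fin l → K) (i : Fin l),
        ρ (RingQuot.mkAlgHom K (qWeylFiberRel K q 0 0 l) (FreeAlgebra.ι K 1)) v i =
          if h : (i : ℕ) + 1 < l then (q ^ ((i : ℕ) + 1) - 1) * v ⟨(i : ℕ) + 1, h⟩ else 0) ∧
      (∀ W : Submodule K (Fin l → K),
        (∀ (d : qWeylFiber K q 0 0 l) (w : Fin l → K), w ∈ W → ρ d w ∈ W) →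
        W = ⊥ ∨ W = ⊤) :=
  stmt10_general K l q hq
end

section
/- Let V be a finite-dimensional vector space over a field k and J ⊆ End_k(V) a left ideal. Then J = J_U where U = ⋂_{f ∈ J} ker f and J_U = {f : f|_U = 0}. In other words, left ideals of End_k(V) are in bijection with subspaces of V. -/
/-!
A left ideal `J` of `End(V)` contains every `f` with `ker g₁ ⊓ ker g₂ ≤ ker f` for some
`g₁ g₂ ∈ J`: such an `f` factors as `h ∘ (g₁, g₂)` through `V × V`, i.e. `f = h₁ g₁ + h₂ g₂`.
So the kernels of elements of `J` are closed under intersection, and in finite dimension the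
minimal one, `ker g₀`, is the intersection `U` of all of them. Every `f` vanishing on `U` then
lies in `J`.
-/

open LinearMap

namespace LinearMap

variable {K V W X : Type*} [DivisionRing K] [AddCommGroup V] [Module K V]
  [AddCommGroup W] [Module K W] [AddCommGroup X] [Module K X]

theorem exists_comp_eq_of_ker_le {f : V →ₗ[K] W} {g : V →ₗ[K] X} (hker : ker g ≤ ker f) :
    ∃ h : X →ₗ[K] W, h ∘ₗ g = f := by
  obtain ⟨h, hh⟩ := exists_extend
    ((ker g).liftQ f hker ∘ₗ (g.quotKerEquivRange.symm : range g →ₗ[K] V ⧸ ker g))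
  refine ⟨h, LinearMap.ext fun v => ?_⟩
  have := congr($hh ⟨g v, mem_range_self g v⟩)
  simpa [quotKerEquivRange_symm_apply_image] using this

end LinearMap

theorem Submodule.exists_ker_eq {K V : Type*} [DivisionRing K] [AddCommGroup V] [Module K V]
    (p : Submodule K V) : ∃ e : Module.End K V, ker e = p := by
  obtain ⟨q, hq⟩ := p.exists_isCompl
  exact ⟨q.projection p hq.symm, ker_projection _⟩

namespace Ideal

variable {K V : Type*} [DivisionRing K] [AddCommGroup V] [Module K V]

theorem mem_of_ker_inf_ker_le {J : Ideal (Module.End K V)} {g₁ g₂ f : Module.End K V}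
    (hg₁ : g₁ ∈ J) (hg₂ : g₂ ∈ J) (hker : ker g₁ ⊓ ker g₂ ≤ ker f) : f ∈ J := by
  rw [← ker_prod] at hker
  obtain ⟨h, rfl⟩ := exists_comp_eq_of_ker_le hker
  have hsplit : h ∘ₗ g₁.prod g₂ = (h ∘ₗ inl K V V) * g₁ + (h ∘ₗ inr K V V) * g₂ := by
    rw [Module.End.mul_eq_comp, Module.End.mul_eq_comp, ← coprod_comp_prod, ← comp_coprod,
      coprod_inl_inr, comp_id]
  rw [hsplit]
  exact J.add_mem (J.mul_mem_left _ hg₁) (J.mul_mem_left _ hg₂)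

theorem exists_mem_forall_ker_le [FiniteDimensional K V] (J : Ideal (Module.End K V)) :
    ∃ g₀ ∈ J, ∀ g ∈ J, ker g₀ ≤ ker g := by
  obtain ⟨_, ⟨g₀, hg₀, rfl⟩, hmin⟩ := wellFounded_lt.has_min (ker '' (J : Set (Module.End K V)))
    ⟨_, 0, J.zero_mem, rfl⟩
  refine ⟨g₀, hg₀, fun g hg => ?_⟩
  obtain ⟨e, he⟩ := (ker g₀ ⊓ ker g).exists_ker_eq
  have he_mem : e ∈ J := J.mem_of_ker_inf_ker_le hg₀ hg he.ge
  have he_min : ker e = ker g₀ := he.le.trans inf_le_left |>.eq_of_not_lt (hmin _ ⟨e, he_mem, rfl⟩)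
  rw [← he_min, he]
  exact inf_le_right

end Ideal

/-- Every left ideal `J` of `End_k(V)` (`V` finite dimensional) equals
`J_U = {f : f|_U = 0}` where `U = ⋂_{g ∈ J} ker g`; hence left ideals of `End_k(V)`
are in bijection with subspaces of `V`. -/
theorem stmt12 (k V : Type) [Field k] [AddCommGroup V] [Module k V]
    [FiniteDimensional k V] (J : Ideal (Module.End k V)) :
    ∀ f : Module.End k V,
      f ∈ J ↔ ∀ v ∈ ⨅ g ∈ J, LinearMap.ker (g : Module.End k V), f v = 0 := by
  obtain ⟨g₀, hg₀, hmin⟩ := J.exists_mem_forall_ker_le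
  intro f
  exact ⟨fun hf v hv => (iInf₂_le f hf : ⨅ g ∈ J, ker g ≤ ker f) hv,
    fun hf => J.mem_of_ker_inf_ker_le hg₀ hg₀ fun v hv => hf v (le_iInf₂ hmin hv.1)⟩
end

section
/- Let V be a finite-dimensional vector space over a field k and W ⊆ V a subspace. The map End_k(W) → End_{End_k(V)}(Hom_k(W,V))^{op} sending f to the map g ↦ g ∘ f is an algebra isomorphism. -/
/-!
If `ι : M → N` has a retraction `π`, every `End(N)`-linear `φ : Hom(M, N) → Hom(M, N)` is
precomposition with `f := π ∘ φ ι`: writing `g = (g ∘ π) ∘ ι` and using `End(N)`-linearity,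
`φ g = (g ∘ π) ∘ φ ι = g ∘ f`. Injectivity of `f ↦ (· ∘ f)` is seen by evaluating at `ι`.
A subspace of a vector space always has a retraction.
-/

namespace Module.End

variable {R M N : Type*} [CommSemiring R] [AddCommMonoid M] [Module R M]
  [AddCommMonoid N] [Module R N]

variable (N) in
def precomp (f : Module.End R M) : Module.End (Module.End R N) (M →ₗ[R] N) where
  toFun g := g ∘ₗ f
  map_add' g h := LinearMap.add_comp f h g
  map_smul' _ _ := rfl

@[simp]
theorem precomp_apply (f : Module.End R M) (g : M →ₗ[R] N) : precomp N f g = g ∘ₗ f :=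
  rfl

variable (R M N) in
def precompAlgHom : Module.End R M →ₐ[R] (Module.End (Module.End R N) (M →ₗ[R] N))ᵐᵒᵖ where
  toFun f := .op (precomp N f)
  map_one' := rfl
  map_mul' _ _ := rfl
  map_zero' := by
    refine MulOpposite.unop_injective (LinearMap.ext fun g => ?_)
    exact LinearMap.comp_zero g
  map_add' f f' := by
    refine MulOpposite.unop_injective (LinearMap.ext fun g => ?_)
    exact LinearMap.comp_add f f' g
  commutes' c := by
    refine MulOpposite.unop_injective (LinearMap.ext fun g => LinearMap.ext fun x => ?_)
    simp [Module.algebraMap_end_apply]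

theorem precompAlgHom_injective {ι : M →ₗ[R] N} (hι : Function.Injective ι) :
    Function.Injective (precompAlgHom R M N) := fun _ _ h =>
  have hcomp := LinearMap.congr_fun (congrArg MulOpposite.unop h) ι
  LinearMap.ext fun x => hι (LinearMap.congr_fun hcomp x)

theorem eq_precomp_of_leftInverse {ι : M →ₗ[R] N} {π : N →ₗ[R] M} (hπ : π ∘ₗ ι = LinearMap.id)
    (φ : Module.End (Module.End R N) (M →ₗ[R] N)) : φ = precomp N (π ∘ₗ φ ι) := by
  refine LinearMap.ext fun g => ?_
  calc φ g = φ ((g ∘ₗ π) ∘ₗ ι) := by rw [LinearMap.comp_assoc, hπ, LinearMap.comp_id]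
    _ = (g ∘ₗ π) ∘ₗ φ ι := φ.map_smul (g ∘ₗ π) ι
    _ = precomp N (π ∘ₗ φ ι) g := LinearMap.comp_assoc _ _ _

theorem precompAlgHom_surjective {ι : M →ₗ[R] N} {π : N →ₗ[R] M} (hπ : π ∘ₗ ι = LinearMap.id) :
    Function.Surjective (precompAlgHom R M N) := fun φ =>
  ⟨π ∘ₗ φ.unop ι, MulOpposite.unop_injective (eq_precomp_of_leftInverse hπ φ.unop).symm⟩

noncomputable def precompAlgEquivOfLeftInverse {ι : M →ₗ[R] N} {π : N →ₗ[R] M}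
    (hπ : π ∘ₗ ι = LinearMap.id) :
    Module.End R M ≃ₐ[R] (Module.End (Module.End R N) (M →ₗ[R] N))ᵐᵒᵖ :=
  AlgEquiv.ofBijective (precompAlgHom R M N)
    ⟨precompAlgHom_injective (LinearMap.injective_of_comp_eq_id ι π hπ),
      precompAlgHom_surjective hπ⟩

end Module.End

theorem stmt13_general (k V : Type) [Field k] [AddCommGroup V] [Module k V]
    (W : Submodule k V) :
    ∃ e : Module.End k W ≃ₐ[k] (Module.End (Module.End k V) (W →ₗ[k] V))ᵐᵒᵖ,
      ∀ (f : Module.End k W) (g : W →ₗ[k] V), (e f).unop g = g ∘ₗ f := by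
  obtain ⟨π, hπ⟩ := W.subtype.exists_leftInverse_of_injective W.ker_subtype
  exact ⟨Module.End.precompAlgEquivOfLeftInverse hπ, fun _ _ => rfl⟩

/-- For `W ⊆ V` finite dimensional, the map `End_k(W) → End_{End_k(V)}(Hom_k(W,V))^op`,
`f ↦ (g ↦ g ∘ f)`, is an algebra isomorphism; here `Hom_k(W,V)` is a left
`End_k(V)`-module by postcomposition. -/
theorem stmt13 (k V : Type) [Field k] [AddCommGroup V] [Module k V]
    [FiniteDimensional k V] (W : Submodule k V) :
    ∃ e : Module.End k W ≃ₐ[k] (Module.End (Module.End k V) (W →ₗ[k] V))ᵐᵒᵖ,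
      ∀ (f : Module.End k W) (g : W →ₗ[k] V), (e f).unop g = g ∘ₗ f :=
  stmt13_general k V W
end

section
/- Let H be a Hopf algebra over a field K, A an associative K-algebra with an H-module algebra structure ▷, and Φ : H → A a quantum moment map, i.e. h ▷ a = Σ Φ(h₍₁₎) a Φ(S(h₍₂₎)) for all h, a. If I ⊆ H is a Hopf ideal, then the multiplication of A descends to a well-defined associative algebra structure on the H-invariants (A / A·Φ(I))^H. -/
/-!
Using coassociativity and the antipode axiom, the moment map condition can be inverted to
`Φ(x) b = Σ (x₍₁₎ ▷ b) Φ(x₍₂₎)`. If `b` is invariant modulo `J = A·Φ(I)` and `I` is a right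
ideal, the right-hand side is `≡ Σ ε(x₍₁₎) b Φ(x₍₂₎) = b Φ(x)` modulo `J`, which lies in `J`
for `x ∈ I`. Hence `J b ⊆ J` for invariant `b`, so `J` behaves like a two-sided ideal on
invariants: this makes the product well defined, and the module-algebra axiom
`h ▷ (ab) = Σ (h₍₁₎ ▷ a)(h₍₂₎ ▷ b)` makes it preserve invariance.
-/

open scoped TensorProduct

open Coalgebra HopfAlgebra

variable {K H A : Type*} [CommRing K] [Ring H] [HopfAlgebra K H] [Ring A] [Algebra K A]

theorem Coalgebra.Repr.sum_mul_sub_eq_sum {F : Type*} [FunLike F H A] [LinearMapClass F K H A]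
    {x : H} {ι : Type*} (r : Repr K x ι) (u : H → A) (v : F) (c : A) :
    ∑ i ∈ r.index, u (r.left i) * v (r.right i) - c * v x =
      ∑ i ∈ r.index, (u (r.left i) - counit (R := K) (r.left i) • c) * v (r.right i) := by
  rw [← congrArg (fun y => c * v y) (sum_counit_smul r), map_sum, Finset.mul_sum,
    ← Finset.sum_sub_distrib]
  refine Finset.sum_congr rfl fun _ _ => ?_
  rw [map_smul, mul_smul_comm, sub_mul, smul_mul_assoc]

section LeftIdeal

variable (Φ : H →ₐ[K] A) (I : Ideal H)

/-- The left ideal `A·Φ(I)`. -/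
def momentMapIdeal : Submodule K A :=
  Submodule.span K {y | ∃ a : A, ∃ x ∈ I, y = a * Φ x}

variable {Φ I}

theorem mul_map_mem_momentMapIdeal (a : A) {x : H} (hx : x ∈ I) :
    a * Φ x ∈ momentMapIdeal Φ I :=
  Submodule.subset_span ⟨a, x, hx, rfl⟩

theorem momentMapIdeal.mul_mem_left (c : A) {j : A} (hj : j ∈ momentMapIdeal Φ I) :
    c * j ∈ momentMapIdeal Φ I := by
  induction hj using Submodule.span_induction with
  | mem y hy =>
    obtain ⟨a, x, hx, rfl⟩ := hy
    rw [← mul_assoc]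
    exact mul_map_mem_momentMapIdeal _ hx
  | zero => simp
  | add y z _ _ hy hz => rw [mul_add]; exact add_mem hy hz
  | smul k y _ hy => rw [mul_smul_comm]; exact Submodule.smul_mem _ k hy

theorem momentMapIdeal.mul_mem_right {b : A} (hb : ∀ x ∈ I, Φ x * b ∈ momentMapIdeal Φ I)
    {j : A} (hj : j ∈ momentMapIdeal Φ I) : j * b ∈ momentMapIdeal Φ I := by
  induction hj using Submodule.span_induction with
  | mem y hy =>
    obtain ⟨a, x, hx, rfl⟩ := hy
    rw [mul_assoc]
    exact momentMapIdeal.mul_mem_left a (hb x hx)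
  | zero => simp
  | add y z _ _ hy hz => rw [add_mul]; exact add_mem hy hz
  | smul k y _ hy => rw [smul_mul_assoc]; exact Submodule.smul_mem _ k hy

theorem momentMapIdeal.mul_map_mem_right (hright : ∀ x ∈ I, ∀ h : H, x * h ∈ I) (g : H)
    {j : A} (hj : j ∈ momentMapIdeal Φ I) : j * Φ g ∈ momentMapIdeal Φ I := by
  refine momentMapIdeal.mul_mem_right (fun x hx => ?_) hj
  rw [← map_mul, ← one_mul (Φ (x * g))]
  exact mul_map_mem_momentMapIdeal 1 (hright x hx g)

end LeftIdeal

section MomentMap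

variable (act : H →ₗ[K] A →ₗ[K] A) (Φ : H →ₐ[K] A)

def IsQuantumMomentMap : Prop :=
  ∀ (h : H) (a : A), act h a = LinearMap.mul' K A
    (TensorProduct.map ((LinearMap.mulRight K a).comp Φ.toLinearMap)
      (Φ.toLinearMap ∘ₗ antipode K) (comul h))

/-- The class of `a` in `A / J` is `H`-invariant. -/
def IsInvariantMod (J : Submodule K A) (a : A) : Prop :=
  ∀ h : H, act h a - counit (R := K) h • a ∈ J

variable {act Φ}

theorem IsQuantumMomentMap.apply_eq_sum (hΦ : IsQuantumMomentMap act Φ) {h : H} {ι : Type*}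
    (r : Repr K h ι) (a : A) :
    act h a = ∑ i ∈ r.index, Φ (r.left i) * a * Φ (antipode K (r.right i)) := by
  rw [hΦ, ← r.eq, map_sum, map_sum]
  simp

theorem IsQuantumMomentMap.map_mul_eq_sum (hΦ : IsQuantumMomentMap act Φ) {x : H} {ι : Type*}
    (r : Repr K x ι) (b : A) :
    Φ x * b = ∑ i ∈ r.index, act (r.left i) b * Φ (r.right i) := by
  let T : H ⊗[K] (H ⊗[K] H) →ₗ[K] A := LinearMap.mul' K A ∘ₗ
    TensorProduct.map (LinearMap.mulRight K b ∘ₗ Φ.toLinearMap)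
      (LinearMap.mul' K A ∘ₗ TensorProduct.map (Φ.toLinearMap ∘ₗ antipode K) Φ.toLinearMap)
  have hcoassoc := congrArg T
    (sum_tmul_tmul_eq r (fun i => ℛ K (r.left i)) (fun i => ℛ K (r.right i)))
  simp only [T, map_sum, LinearMap.comp_apply, TensorProduct.map_tmul, LinearMap.mul'_apply,
    LinearMap.mulRight_apply, AlgHom.toLinearMap_apply] at hcoassoc
  have hcounit := congrArg (TensorProduct.rid K A)
    (sum_map_tmul_counit_eq (LinearMap.mulRight K b ∘ₗ Φ.toLinearMap) x (repr := r))
  simp only [map_sum, TensorProduct.rid_tmul, LinearMap.comp_apply, LinearMap.mulRight_apply,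
    AlgHom.toLinearMap_apply, one_smul] at hcounit
  symm
  calc ∑ i ∈ r.index, act (r.left i) b * Φ (r.right i)
      = ∑ i ∈ r.index, ∑ j ∈ (ℛ K (r.left i)).index, Φ ((ℛ K (r.left i)).left j) * b *
          (Φ (antipode K ((ℛ K (r.left i)).right j)) * Φ (r.right i)) := by
        simp_rw [hΦ.apply_eq_sum (ℛ K _), Finset.sum_mul, mul_assoc]
    _ = ∑ i ∈ r.index, ∑ j ∈ (ℛ K (r.right i)).index, Φ (r.left i) * b *
          (Φ (antipode K ((ℛ K (r.right i)).left j)) * Φ ((ℛ K (r.right i)).right j)) :=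
        hcoassoc
    _ = ∑ i ∈ r.index, counit (R := K) (r.right i) • (Φ (r.left i) * b) := by
        simp_rw [← Finset.mul_sum, ← map_mul, ← map_sum, sum_antipode_mul_eq_smul, map_smul,
          map_one, mul_smul_one]
    _ = Φ x * b := hcounit

theorem IsQuantumMomentMap.map_mul_mem (hΦ : IsQuantumMomentMap act Φ) {J : Submodule K A}
    (hJ : ∀ (g : H), ∀ j ∈ J, j * Φ g ∈ J) {b : A} (hb : IsInvariantMod act J b) {x : H}
    (hx : b * Φ x ∈ J) : Φ x * b ∈ J := by
  have hsum : Φ x * b - b * Φ x ∈ J := by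
    rw [hΦ.map_mul_eq_sum (ℛ K x), Repr.sum_mul_sub_eq_sum _ (act · b) Φ]
    exact Submodule.sum_mem _ fun _ _ => hJ _ _ (hb _)
  simpa using add_mem hsum hx

theorem IsInvariantMod.mul_apply_mem {J : Submodule K A}
    (hleft : ∀ (c : A), ∀ j ∈ J, c * j ∈ J) {b : A} (hJb : ∀ j ∈ J, j * b ∈ J)
    (hb : IsInvariantMod act J b) (g : H) {j : A} (hj : j ∈ J) : j * act g b ∈ J := by
  have hsplit : j * act g b =
      j * (act g b - counit (R := K) g • b) + counit (R := K) g • (j * b) := by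
    rw [mul_sub, mul_smul_comm, sub_add_cancel]
  rw [hsplit]
  exact add_mem (hleft j _ (hb g)) (Submodule.smul_mem _ _ (hJb j hj))

theorem IsInvariantMod.mul
    (hmodalg : ∀ (h : H) (a b : A), act h (a * b) = LinearMap.mul' K A
      (TensorProduct.map (act.flip a) (act.flip b) (comul (R := K) h)))
    {J : Submodule K A} (hleft : ∀ (c : A), ∀ j ∈ J, c * j ∈ J) {a b : A}
    (hJb : ∀ j ∈ J, j * b ∈ J) (ha : IsInvariantMod act J a) (hb : IsInvariantMod act J b) :
    IsInvariantMod act J (a * b) := by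
  intro h
  have hsweedler : act h (a * b) =
      ∑ i ∈ (ℛ K h).index, act ((ℛ K h).left i) a * act ((ℛ K h).right i) b := by
    rw [hmodalg, ← (ℛ K h).eq, map_sum, map_sum]
    simp
  have hsplit : act h (a * b) - counit (R := K) h • (a * b) =
      (act h (a * b) - a * act h b) + a * (act h b - counit (R := K) h • b) := by
    rw [mul_sub, mul_smul_comm, sub_add_sub_cancel]
  have hcounit := Repr.sum_mul_sub_eq_sum (ℛ K h) (act · a) (act.flip b) a
  simp only [LinearMap.flip_apply] at hcounit
  rw [hsplit, hsweedler, hcounit]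
  refine add_mem (Submodule.sum_mem _ fun _ _ => ?_) (hleft a _ (hb h))
  exact hb.mul_apply_mem hleft hJb _ (ha _)

end MomentMap

theorem stmt16_general (K H A : Type) [CommRing K] [Ring H] [HopfAlgebra K H]
    [Ring A] [Algebra K A]
    (act : H →ₗ[K] A →ₗ[K] A)
    -- `A` is an `H`-module algebra: `h ▷ (ab) = Σ (h₍₁₎ ▷ a)(h₍₂₎ ▷ b)`, `h ▷ 1 = ε(h)1`:
    (hmodalg : ∀ (h : H) (a b : A),
      act h (a * b) = LinearMap.mul' K A
        (TensorProduct.map (act.flip a) (act.flip b) (Coalgebra.comul (R := K) h)))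
    (Φ : H →ₐ[K] A)
    -- quantum moment map condition: `h ▷ a = Σ Φ(h₍₁₎) · a · Φ(S(h₍₂₎))`:
    (hmom : ∀ (h : H) (a : A),
      act h a = LinearMap.mul' K A
        (TensorProduct.map ((LinearMap.mulRight K a).comp Φ.toLinearMap)
          (Φ.toLinearMap ∘ₗ HopfAlgebra.antipode (R := K))
          (Coalgebra.comul (R := K) h)))
    (I : Ideal H)
    -- `I` is a two-sided Hopf ideal:
    (hright : ∀ x ∈ I, ∀ h : H, x * h ∈ I) :
    -- `J = A·Φ(I)`; a class in `A/J` is `H`-invariant iff `h ▷ a - ε(h)a ∈ J` for all `h`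
    ∀ (J : Submodule K A),
      J = Submodule.span K {y : A | ∃ a : A, ∃ x ∈ I, y = a * Φ x} →
      ((∀ a b : A,
          (∀ h : H, act h a - Coalgebra.counit (R := K) h • a ∈ J) →
          (∀ h : H, act h b - Coalgebra.counit (R := K) h • b ∈ J) →
          (∀ h : H, act h (a * b) - Coalgebra.counit (R := K) h • (a * b) ∈ J)) ∧
        (∀ a a' b b' : A,
          (∀ h : H, act h a - Coalgebra.counit (R := K) h • a ∈ J) →
          (∀ h : H, act h a' - Coalgebra.counit (R := K) h • a' ∈ J) →
          (∀ h : H, act h b - Coalgebra.counit (R := K) h • b ∈ J) →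
          (∀ h : H, act h b' - Coalgebra.counit (R := K) h • b' ∈ J) →
          a - a' ∈ J → b - b' ∈ J → a * b - a' * b' ∈ J)) := by
  rintro J rfl
  have hΦ : IsQuantumMomentMap act Φ := hmom
  have hleft : ∀ (c : A), ∀ j ∈ momentMapIdeal Φ I, c * j ∈ momentMapIdeal Φ I :=
    fun c _ => momentMapIdeal.mul_mem_left c
  have hright_inv : ∀ b, IsInvariantMod act (momentMapIdeal Φ I) b →
      ∀ j ∈ momentMapIdeal Φ I, j * b ∈ momentMapIdeal Φ I := fun b hb _ =>
    momentMapIdeal.mul_mem_right fun _ hx =>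
      hΦ.map_mul_mem (fun g _ => momentMapIdeal.mul_map_mem_right hright g) hb
        (mul_map_mem_momentMapIdeal b hx)
  refine ⟨fun a b ha hb => IsInvariantMod.mul hmodalg hleft (hright_inv b hb) ha hb,
    fun a a' b b' _ _ _ hb' haa' hbb' => ?_⟩
  rw [show a * b - a' * b' = a * (b - b') + (a - a') * b' by noncomm_ring]
  exact add_mem (hleft a _ hbb') (hright_inv b' hb' _ haa')

/-- Let `H` be a Hopf algebra over `K`, `A` an `H`-module algebra with action `act`, and
`Φ : H → A` a quantum moment map, i.e. `h ▷ a = Σ Φ(h₍₁₎) a Φ(S h₍₂₎)`.  If `I ⊆ H` is a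
Hopf ideal and `J = A·Φ(I)` the left ideal it generates, then the multiplication of `A`
descends to a well-defined (associative) algebra structure on the `H`-invariants
`(A / A·Φ(I))^H`: the product of two invariant classes is invariant, and the product does
not depend on the chosen representatives. -/
theorem stmt16 (K H A : Type) [CommRing K] [Ring H] [HopfAlgebra K H]
    [Ring A] [Algebra K A]
    (act : H →ₗ[K] A →ₗ[K] A)
    -- `act` is a module action of the algebra `H`:
    (hact1 : ∀ a : A, act 1 a = a)
    (hactmul : ∀ (h h' : H) (a : A), act (h * h') a = act h (act h' a))
    -- `A` is an `H`-module algebra: `h ▷ (ab) = Σ (h₍₁₎ ▷ a)(h₍₂₎ ▷ b)`, `h ▷ 1 = ε(h)1`: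
    (hmodalg : ∀ (h : H) (a b : A),
      act h (a * b) = LinearMap.mul' K A
        (TensorProduct.map (act.flip a) (act.flip b) (Coalgebra.comul (R := K) h)))
    (hmodone : ∀ h : H, act h 1 = Coalgebra.counit (R := K) h • (1 : A))
    (Φ : H →ₐ[K] A)
    -- quantum moment map condition: `h ▷ a = Σ Φ(h₍₁₎) · a · Φ(S(h₍₂₎))`:
    (hmom : ∀ (h : H) (a : A),
      act h a = LinearMap.mul' K A
        (TensorProduct.map ((LinearMap.mulRight K a).comp Φ.toLinearMap)
          (Φ.toLinearMap ∘ₗ HopfAlgebra.antipode (R := K))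
          (Coalgebra.comul (R := K) h)))
    (I : Ideal H)
    -- `I` is a two-sided Hopf ideal:
    (hright : ∀ x ∈ I, ∀ h : H, x * h ∈ I)
    (hcomul : ∀ x ∈ I, Coalgebra.comul (R := K) x ∈
      (LinearMap.range (TensorProduct.map (Submodule.restrictScalars K I).subtype
          (LinearMap.id : H →ₗ[K] H)) ⊔
        LinearMap.range (TensorProduct.map (LinearMap.id : H →ₗ[K] H)
          (Submodule.restrictScalars K I).subtype)))
    (hcounit : ∀ x ∈ I, Coalgebra.counit (R := K) x = (0 : K))
    (hantipode : ∀ x ∈ I, HopfAlgebra.antipode (R := K) x ∈ I) :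
    -- `J = A·Φ(I)`; a class in `A/J` is `H`-invariant iff `h ▷ a - ε(h)a ∈ J` for all `h`
    ∀ (J : Submodule K A),
      J = Submodule.span K {y : A | ∃ a : A, ∃ x ∈ I, y = a * Φ x} →
      ((∀ a b : A,
          (∀ h : H, act h a - Coalgebra.counit (R := K) h • a ∈ J) →
          (∀ h : H, act h b - Coalgebra.counit (R := K) h • b ∈ J) →
          (∀ h : H, act h (a * b) - Coalgebra.counit (R := K) h • (a * b) ∈ J)) ∧
        (∀ a a' b b' : A,
          (∀ h : H, act h a - Coalgebra.counit (R := K) h • a ∈ J) →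
          (∀ h : H, act h a' - Coalgebra.counit (R := K) h • a' ∈ J) →
          (∀ h : H, act h b - Coalgebra.counit (R := K) h • b ∈ J) →
          (∀ h : H, act h b' - Coalgebra.counit (R := K) h • b' ∈ J) →
          a - a' ∈ J → b - b' ∈ J → a * b - a' * b' ∈ J)) :=
  stmt16_general K H A act hmodalg Φ hmom I hright
end
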